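/- arXiv:math/0607778 — 7 statements merged into one kernel-verified Lean document; each statement's English description precedes it below -/
import Mathlib

section
/- Let g be an element of the Grigorchuk group G. If α_0(g)=0 and α_1(g)=0, then β_00(g)=β_11(g)=β_01(g)=β_10(g) (modulo 2). -/
/-!
We model the group `Aut(T)` of automorphisms of the binary rooted tree via portraits:
an automorphism is uniquely determined by the function `List Bool → Bool` recording,
for every vertex `u` (a finite binary word, `false = 0`, `true = 1`), whether the
automorphism is active (i.e. swaps the two subtrees) at `u`.  Under this identification
`α_u(g) = g u`, the section of `g` at `u` is `fun v => g (u ++ v)`, and the group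
operation corresponds to composition of tree automorphisms.
-/

/-- Automorphisms of the binary rooted tree, encoded by their portraits. -/
def AutT : Type := List Bool → Bool

namespace AutT

/-- The section of a tree automorphism at a first-level vertex. -/
def sec (g : AutT) (x : Bool) : AutT := fun u => g (x :: u)

/-- The section of a tree automorphism at an arbitrary vertex `u`. -/
def secAt (g : AutT) (u : List Bool) : AutT := fun v => g (u ++ v)

/-- The activity (decoration of the portrait) of `g` at the vertex `u`:
`α_u(g) = 1` iff `g` is active at `u`. -/
def alpha (g : AutT) (u : List Bool) : Bool := g u

/-- The action of a tree automorphism on the vertices of the tree. -/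
def act : AutT → List Bool → List Bool
  | _, [] => []
  | g, x :: u => (xor (g []) x) :: act (sec g x) u

/-- Auxiliary function defining the product of two tree automorphisms
(`g * h` acts as `g` followed by `h`). -/
def mulAux : List Bool → AutT → AutT → Bool
  | [], g, h => xor (g []) (h [])
  | x :: u, g, h => mulAux u (sec g x) (sec h (xor x (g [])))

instance : Mul AutT := ⟨fun g h u => mulAux u g h⟩

/-- Auxiliary function defining the inverse of a tree automorphism. -/
def invAux : List Bool → AutT → Bool
  | [], g => g []
  | x :: u, g => invAux u (sec g (xor x (g [])))

instance : One AutT := ⟨fun _ => false⟩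
instance : Inv AutT := ⟨fun g u => invAux u g⟩

lemma one_apply (u : List Bool) : (1 : AutT) u = false := rfl

lemma mul_apply_nil (g h : AutT) : (g * h) [] = xor (g []) (h []) := rfl

lemma mul_apply_cons (g h : AutT) (x : Bool) (u : List Bool) :
    (g * h) (x :: u) = (sec g x * sec h (xor x (g []))) u := rfl

lemma sec_mul (g h : AutT) (x : Bool) :
    sec (g * h) x = sec g x * sec h (xor x (g [])) := rfl

lemma sec_one (x : Bool) : sec (1 : AutT) x = 1 := rfl

lemma inv_apply_nil (g : AutT) : (g⁻¹ : AutT) [] = g [] := rfl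

lemma sec_inv (g : AutT) (x : Bool) :
    sec (g⁻¹ : AutT) x = (sec g (xor x (g [])))⁻¹ := rfl

private lemma mul_assoc' (g h k : AutT) : g * h * k = g * (h * k) := by
  funext u
  induction u generalizing g h k with
  | nil => simp [mul_apply_nil, Bool.xor_assoc]
  | cons x u ih =>
      rw [mul_apply_cons, mul_apply_cons, sec_mul, mul_apply_nil, sec_mul, ih,
        Bool.xor_assoc]

private lemma one_mul' (g : AutT) : 1 * g = g := by
  funext u
  induction u generalizing g with
  | nil => simp [mul_apply_nil, one_apply]
  | cons x u ih => rw [mul_apply_cons, sec_one, one_apply, Bool.xor_false, ih]; rfl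

private lemma inv_mul_cancel' (g : AutT) : g⁻¹ * g = 1 := by
  funext u
  induction u generalizing g with
  | nil => simp [mul_apply_nil, inv_apply_nil, one_apply]
  | cons x u ih =>
      rw [mul_apply_cons, inv_apply_nil, sec_inv, ih]; rfl

instance : Group AutT :=
  Group.ofLeftAxioms mul_assoc' one_mul' inv_mul_cancel'

/-- The generator `a = (1,1)σ` of the Grigorchuk group. -/
def genA : AutT := fun u => decide (u = [])

/-- The generators `b`, `c`, `d` of the Grigorchuk group, defined simultaneously:
`bcdAux 0 = b = (a, c)`, `bcdAux 1 = c = (a, d)`, `bcdAux 2 = d = (1, b)`. -/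
def bcdAux : Fin 3 → List Bool → Bool
  | _, [] => false
  | i, false :: u => if i.val = 2 then false else decide (u = [])
  | i, true :: u => bcdAux (i + 1) u

/-- The generator `b = (a, c)` of the Grigorchuk group. -/
def genB : AutT := bcdAux 0

/-- The generator `c = (a, d)` of the Grigorchuk group. -/
def genC : AutT := bcdAux 1

/-- The generator `d = (1, b)` of the Grigorchuk group. -/
def genD : AutT := bcdAux 2

/-- The Grigorchuk group, as a subgroup of the group of binary rooted tree
automorphisms. -/
def Grigorchuk : Subgroup AutT := Subgroup.closure {genA, genB, genC, genD}

/-- `β_{xy}(g) = α_{xy}(g) + α_{x ȳ 0}(g) + α_{x ȳ 1}(g)` (mod 2). -/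
def beta (g : AutT) (x y : Bool) : Bool :=
  xor (g [x, y]) (xor (g [x, !y, false]) (g [x, !y, true]))

end AutT

namespace AutT

/-! ### Auxiliary machinery for Statement 0.

We verify that every element of the Grigorchuk group satisfies three constraints on
the portrait bits at the vertices of levels `≤ 3`: two linear constraints `cL0`, `cL1`
and one quadratic constraint `cX` (all over `𝔽₂`).  These constraints are preserved
under multiplication and inversion, hold for the generators, and imply the desired
statement about the `β`'s. -/

private lemma mulb1 (g h : AutT) (x : Bool) :
    (g * h) [x] = xor (g [x]) (h [xor x (g [])]) := rfl

private lemma mulb2 (g h : AutT) (x y : Bool) :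
    (g * h) [x, y] = xor (g [x, y]) (h [xor x (g []), xor y (g [x])]) := rfl

private lemma mulb3 (g h : AutT) (x y z : Bool) :
    (g * h) [x, y, z] =
      xor (g [x, y, z]) (h [xor x (g []), xor y (g [x]), xor z (g [x, y])]) := rfl

private lemma invb1 (g : AutT) (x : Bool) :
    (g⁻¹ : AutT) [x] = g [xor x (g [])] := rfl

private lemma invb2 (g : AutT) (x y : Bool) :
    (g⁻¹ : AutT) [x, y] = g [xor x (g []), xor y (g [xor x (g [])])] := rfl

private lemma invb3 (g : AutT) (x y z : Bool) :
    (g⁻¹ : AutT) [x, y, z] =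
      g [xor x (g []), xor y (g [xor x (g [])]),
         xor z (g [xor x (g []), xor y (g [xor x (g [])])])] := rfl

/-- Booleans into `𝔽₂`. -/
private def bz (b : Bool) : ZMod 2 := cond b 1 0

private lemma bz_xor (a b : Bool) : bz (xor a b) = bz a + bz b := by
  cases a <;> cases b <;> rfl

private lemma bz_and (a b : Bool) : bz (a && b) = bz a * bz b := by
  cases a <;> cases b <;> rfl

private lemma bz_false : bz false = 0 := rfl
private lemma bz_true : bz true = 1 := rfl

private lemma bz_inj {a b : Bool} (h : bz a = bz b) : a = b := by
  revert h; cases a <;> cases b <;> decide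

private lemma xor_ff : xor false false = false := rfl
private lemma xor_ft : xor false true = true := rfl
private lemma xor_tf : xor true false = true := rfl
private lemma xor_tt : xor true true = false := rfl

private lemma z2 : (2 : ZMod 2) = 0 := rfl
private lemma z3 : (3 : ZMod 2) = 1 := rfl
private lemma z4 : (4 : ZMod 2) = 0 := rfl
private lemma z5 : (5 : ZMod 2) = 1 := rfl
private lemma z6 : (6 : ZMod 2) = 0 := rfl
private lemma z7 : (7 : ZMod 2) = 1 := rfl
private lemma z8 : (8 : ZMod 2) = 0 := rfl
private lemma z9 : (9 : ZMod 2) = 1 := rfl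
private lemma z10 : (10 : ZMod 2) = 0 := rfl
private lemma z11 : (11 : ZMod 2) = 1 := rfl
private lemma z12 : (12 : ZMod 2) = 0 := rfl
private lemma z13 : (13 : ZMod 2) = 1 := rfl
private lemma z14 : (14 : ZMod 2) = 0 := rfl
private lemma z15 : (15 : ZMod 2) = 1 := rfl
private lemma z16 : (16 : ZMod 2) = 0 := rfl
private lemma z17 : (17 : ZMod 2) = 1 := rfl
private lemma z18 : (18 : ZMod 2) = 0 := rfl
private lemma z19 : (19 : ZMod 2) = 1 := rfl
private lemma z20 : (20 : ZMod 2) = 0 := rfl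

/-- First linear constraint: the total activity in the subtree of `0` at levels `2, 3`
plus the activity at `1` vanishes. -/
private def cL0 (g : AutT) : Bool :=
  xor (g [true]) (xor (g [false, false]) (xor (g [false, true]) (xor (g [false, false, false]) (xor (g [false, false, true]) (xor (g [false, true, false]) (g [false, true, true]))))))

/-- Second linear constraint (mirror image of the first). -/
private def cL1 (g : AutT) : Bool :=
  xor (g [false]) (xor (g [true, false]) (xor (g [true, true]) (xor (g [true, false, false]) (xor (g [true, false, true]) (xor (g [true, true, false]) (g [true, true, true]))))))

/-- The quadratic constraint: `β₀₁ + β₁₁ + α₀ α₁ = 0`. -/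
private def cX (g : AutT) : Bool :=
  xor (g [false, true]) (xor (g [true, true]) (xor (g [false, false, false]) (xor (g [false, false, true]) (xor (g [true, false, false]) (xor (g [true, false, true]) (g [false] && g [true]))))))

set_option maxHeartbeats 4000000 in
private lemma cL0_mul_id (g h : AutT) :
    bz (cL0 (g * h)) =
      bz (cL0 g) + bz (cL0 h) + bz (g []) * (bz (cL0 h) + bz (cL1 h)) := by
  unfold cL0 cL1
  simp only [mulb1, mulb2, mulb3]
  cases hr : g [] <;> cases ha : g [false] <;>
    cases hc : g [false, false] <;> cases hd : g [false, true] <;>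
    · simp only [hr, ha, hc, hd, xor_ff, xor_ft, xor_tf, xor_tt, bz_xor, bz_and,
        bz_false, bz_true]
      ring_nf
      all_goals simp only [z2, z3, z4, z5, z6, z7, z8, z9, z10, z11, z12, z13, z14, z15, z16, z17, z18, z19, z20, mul_zero, zero_mul, mul_one, one_mul,
        add_zero, zero_add]

set_option maxHeartbeats 4000000 in
private lemma cL1_mul_id (g h : AutT) :
    bz (cL1 (g * h)) =
      bz (cL1 g) + bz (cL1 h) + bz (g []) * (bz (cL0 h) + bz (cL1 h)) := by
  unfold cL0 cL1
  simp only [mulb1, mulb2, mulb3]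
  cases hr : g [] <;> cases hb : g [true] <;>
    cases he : g [true, false] <;> cases hf : g [true, true] <;>
    · simp only [hr, hb, he, hf, xor_ff, xor_ft, xor_tf, xor_tt, bz_xor, bz_and,
        bz_false, bz_true]
      ring_nf
      all_goals simp only [z2, z3, z4, z5, z6, z7, z8, z9, z10, z11, z12, z13, z14, z15, z16, z17, z18, z19, z20, mul_zero, zero_mul, mul_one, one_mul,
        add_zero, zero_add]

set_option maxHeartbeats 8000000 in
private lemma cX_mul_id (g h : AutT) :
    bz (cX (g * h)) =
      bz (cX g) + bz (cX h) +
        (bz (g [false]) + bz (g []) * (bz (g [false]) + bz (g [true]))) * bz (cL0 h) +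
        (bz (g [true]) + bz (g []) * (bz (g [false]) + bz (g [true]))) * bz (cL1 h) := by
  unfold cL0 cL1 cX
  simp only [mulb1, mulb2, mulb3]
  cases hr : g [] <;> cases ha : g [false] <;> cases hb : g [true] <;>
    cases hc : g [false, false] <;> cases he : g [true, false] <;>
    · simp only [hr, ha, hb, hc, he, xor_ff, xor_ft, xor_tf, xor_tt, bz_xor, bz_and,
        bz_false, bz_true]
      ring_nf
      all_goals simp only [z2, z3, z4, z5, z6, z7, z8, z9, z10, z11, z12, z13, z14, z15, z16, z17, z18, z19, z20, mul_zero, zero_mul, mul_one, one_mul,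
        add_zero, zero_add]

set_option maxHeartbeats 16000000 in
private lemma inv_ids (g : AutT) :
    bz (cL0 (g⁻¹ : AutT)) = bz (cL0 g) + bz (g []) * (bz (cL0 g) + bz (cL1 g)) ∧
    bz (cL1 (g⁻¹ : AutT)) = bz (cL1 g) + bz (g []) * (bz (cL0 g) + bz (cL1 g)) ∧
    bz (cX (g⁻¹ : AutT)) =
      bz (cX g) + bz (g [false]) * bz (cL0 g) + bz (g [true]) * bz (cL1 g) := by
  unfold cL0 cL1 cX
  cases hr : g [] <;> cases ha : g [false] <;> cases hb : g [true] <;>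
    cases hc : g [false, false] <;> cases hd : g [false, true] <;>
    cases he : g [true, false] <;> cases hf : g [true, true] <;>
    · refine ⟨?_, ?_, ?_⟩ <;>
      · simp only [invb1, invb2, invb3, hr, ha, hb, hc, hd, he, hf,
          xor_ff, xor_ft, xor_tf, xor_tt, bz_xor, bz_and, bz_false, bz_true]
        ring_nf
        all_goals simp only [z2, z3, z4, z5, z6, z7, z8, z9, z10, z11, z12, z13, z14, z15, z16, z17, z18, z19, z20, mul_zero, zero_mul, mul_one, one_mul,
          add_zero, zero_add]

/-- The invariant: all three constraints vanish. -/
private def inv3 (g : AutT) : Prop := cL0 g = false ∧ cL1 g = false ∧ cX g = false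

private lemma inv3_mul {g h : AutT} (hg : inv3 g) (hh : inv3 h) : inv3 (g * h) := by
  obtain ⟨hg0, hg1, hg2⟩ := hg
  obtain ⟨hh0, hh1, hh2⟩ := hh
  refine ⟨bz_inj ?_, bz_inj ?_, bz_inj ?_⟩
  · rw [cL0_mul_id, hg0, hh0, hh1]; simp [bz_false]
  · rw [cL1_mul_id, hg1, hh0, hh1]; simp [bz_false]
  · rw [cX_mul_id, hg2, hh2, hh0, hh1]; simp [bz_false]

private lemma inv3_inv {g : AutT} (hg : inv3 g) : inv3 (g⁻¹ : AutT) := by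
  obtain ⟨hg0, hg1, hg2⟩ := hg
  obtain ⟨e0, e1, e2⟩ := inv_ids g
  refine ⟨bz_inj ?_, bz_inj ?_, bz_inj ?_⟩
  · rw [e0, hg0, hg1]; simp [bz_false]
  · rw [e1, hg0, hg1]; simp [bz_false]
  · rw [e2, hg0, hg1, hg2]; simp [bz_false]

private lemma inv3_one : inv3 (1 : AutT) := ⟨rfl, rfl, rfl⟩

private lemma inv3_genA : inv3 genA := ⟨by decide, by decide, by decide⟩
private lemma inv3_genB : inv3 genB := ⟨by decide, by decide, by decide⟩
private lemma inv3_genC : inv3 genC := ⟨by decide, by decide, by decide⟩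
private lemma inv3_genD : inv3 genD := ⟨by decide, by decide, by decide⟩

private lemma inv3_of_mem {g : AutT} (hg : g ∈ Grigorchuk) : inv3 g := by
  refine Subgroup.closure_induction (p := fun x _ => inv3 x) ?_ inv3_one
    (fun x y _ _ hx hy => inv3_mul hx hy) (fun x _ hx => inv3_inv hx) hg
  rintro x hx
  simp only [Set.mem_insert_iff, Set.mem_singleton_iff] at hx
  rcases hx with rfl | rfl | rfl | rfl
  exacts [inv3_genA, inv3_genB, inv3_genC, inv3_genD]

private lemma bz_add_eq_zero {a b : Bool} (h : bz a + bz b = 0) : a = b := by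
  revert h; cases a <;> cases b <;> decide

set_option maxHeartbeats 1000000 in
private lemma beta_ids (g : AutT) :
    bz (beta g false false) + bz (beta g true true) =
      bz (cL0 g) + bz (cX g) + bz (g [true]) + bz (g [false]) * bz (g [true]) ∧
    bz (beta g true true) + bz (beta g false true) =
      bz (cX g) + bz (g [false]) * bz (g [true]) ∧
    bz (beta g false true) + bz (beta g true false) =
      bz (cL1 g) + bz (cX g) + bz (g [false]) + bz (g [false]) * bz (g [true]) := by
  unfold beta cL0 cL1 cX
  refine ⟨?_, ?_, ?_⟩ <;>
  · simp only [Bool.not_false, Bool.not_true, bz_xor, bz_and]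
    ring_nf
    all_goals simp only [z2, z3, z4, z5, z6, z7, z8, z9, z10, z11, z12, z13, z14, z15, z16, z17, z18, z19, z20, mul_zero, zero_mul, mul_one, one_mul,
      add_zero, zero_add]

end AutT

open AutT

/-- For `g` in the Grigorchuk group, if `α₀(g) = 0` and `α₁(g) = 0`
then `β₀₀(g) = β₁₁(g) = β₀₁(g) = β₁₀(g)` (mod 2). -/
theorem grigorchuk_beta_constraint_of_inactive_inactive
    (g : AutT) (hg : g ∈ Grigorchuk)
    (h0 : alpha g [false] = false) (h1 : alpha g [true] = false) :
    beta g false false = beta g true true ∧ beta g true true = beta g false true ∧ beta g false true = beta g true false := by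
  obtain ⟨p0, p1, p2⟩ := AutT.inv3_of_mem hg
  have hgf : g [false] = false := h0
  have hgt : g [true] = false := h1
  have q0 : AutT.bz (AutT.cL0 g) = 0 := by rw [p0]; rfl
  have q1 : AutT.bz (AutT.cL1 g) = 0 := by rw [p1]; rfl
  have q2 : AutT.bz (AutT.cX g) = 0 := by rw [p2]; rfl
  have qf : AutT.bz (g [false]) = 0 := by rw [hgf]; rfl
  have qt : AutT.bz (g [true]) = 0 := by rw [hgt]; rfl
  obtain ⟨i1, i2, i3⟩ := AutT.beta_ids g
  refine ⟨AutT.bz_add_eq_zero ?_, AutT.bz_add_eq_zero ?_, AutT.bz_add_eq_zero ?_⟩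
  · rw [i1, q0, q2, qt, qf]; ring
  · rw [i2, q2, qf, qt]; ring
  · rw [i3, q1, q2, qf, qt]; ring
end

section
/- Let g be an element of the Grigorchuk group G. If α_0(g)=0 and α_1(g)=1, then β_11(g)=β_01(g)=β_10(g) and β_00(g)≠β_11(g) (modulo 2). -/
open AutT

namespace GrigAux

open AutT

/-- `(g*h) u = g u ⊕ h (g·u)`. -/
lemma mul_apply (g h : AutT) (u : List Bool) :
    (g * h) u = xor (g u) (h (act g u)) := by
  induction u generalizing g h with
  | nil => rfl
  | cons x u ih =>
      rw [mul_apply_cons, ih]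
      simp [sec, act, Bool.xor_comm]

lemma genA_sq : genA * genA = (1 : AutT) := by
  funext u
  cases u with
  | nil => rfl
  | cons x u => simp [mul_apply, genA, act, one_apply]

lemma sec_bcd_true (i : Fin 3) : sec (bcdAux i) true = bcdAux (i + 1) := by
  funext u; rfl

lemma sec_bcd_false (i : Fin 3) :
    sec (bcdAux i) false = if i.val = 2 then (1 : AutT) else genA := by
  funext u
  by_cases h : i.val = 2 <;> simp [sec, bcdAux, h, one_apply, genA]

lemma mulAux_one_one (u : List Bool) : mulAux u (1 : AutT) (1 : AutT) = false := by
  have h : ((1 : AutT) * 1) u = false := by rw [mul_one]; rfl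
  exact h

lemma mulAux_A_A (u : List Bool) : mulAux u genA genA = false := by
  have h : (genA * genA) u = false := by rw [genA_sq]; rfl
  exact h

lemma bcd_sq (u : List Bool) (i : Fin 3) :
    mulAux u (bcdAux i) (bcdAux i) = false := by
  induction u generalizing i with
  | nil => simp [mulAux, bcdAux]
  | cons x u ih =>
      have hnil : bcdAux i [] = false := by simp [bcdAux]
      show mulAux u (sec (bcdAux i) x) (sec (bcdAux i) (xor x (bcdAux i []))) = false
      rw [hnil, Bool.xor_false]
      cases x with
      | false =>
          rw [sec_bcd_false]
          split
          · exact mulAux_one_one u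
          · exact mulAux_A_A u
      | true => rw [sec_bcd_true]; exact ih _

lemma genB_sq : genB * genB = (1 : AutT) := funext fun u => bcd_sq u 0
lemma genC_sq : genC * genC = (1 : AutT) := funext fun u => bcd_sq u 1
lemma genD_sq : genD * genD = (1 : AutT) := funext fun u => bcd_sq u 2

lemma genA_inv : genA⁻¹ = genA := inv_eq_of_mul_eq_one_right genA_sq
lemma genB_inv : genB⁻¹ = genB := inv_eq_of_mul_eq_one_right genB_sq
lemma genC_inv : genC⁻¹ = genC := inv_eq_of_mul_eq_one_right genC_sq
lemma genD_inv : genD⁻¹ = genD := inv_eq_of_mul_eq_one_right genD_sq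

/-- Projected finite state of a tree automorphism. -/
def tr (g : AutT) : List Bool :=
  [g [], g [false], g [true],
   g [false, false], g [false, true], g [true, false], g [true, true],
   xor (g [false, false]) (xor (g [false, true, false]) (g [false, true, true])),
   xor (g [false, true]) (xor (g [false, false, false]) (g [false, false, true])),
   xor (g [true, false]) (xor (g [true, true, false]) (g [true, true, true])),
   xor (g [true, true]) (xor (g [true, false, false]) (g [true, false, true]))]

/-- Effect on the projected state of right multiplication by `s`. -/
def rstep (s : AutT) : List Bool → List Bool
  | [b0, b1, b2, b3, b4, b5, b6, p0, p1, p2, p3] =>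
    [xor b0 (s []),
     xor b1 (s [b0]),
     xor b2 (s [!b0]),
     xor b3 (s [b0, b1]),
     xor b4 (s [b0, !b1]),
     xor b5 (s [!b0, b2]),
     xor b6 (s [!b0, !b2]),
     xor p0 (xor (s [b0, b1]) (xor (s [b0, !b1, b4]) (s [b0, !b1, !b4]))),
     xor p1 (xor (s [b0, !b1]) (xor (s [b0, b1, b3]) (s [b0, b1, !b3]))),
     xor p2 (xor (s [!b0, b2]) (xor (s [!b0, !b2, b6]) (s [!b0, !b2, !b6]))),
     xor p3 (xor (s [!b0, !b2]) (xor (s [!b0, b2, b5]) (s [!b0, b2, !b5])))]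
  | t => t

lemma xor_shuffle (a b c d e f : Bool) :
    xor (xor a b) (xor (xor c d) (xor e f)) = xor (xor a (xor c e)) (xor b (xor d f)) := by
  revert a b c d e f; decide

lemma tr_mul (g s : AutT) : tr (g * s) = rstep s (tr g) := by
  simp only [tr, rstep, mul_apply, act, sec, Bool.xor_false, Bool.xor_true,
    List.cons.injEq]
  and_intros <;> first
    | trivial
    | apply xor_shuffle


/-- The set of projected states of elements of the Grigorchuk group. -/
def RR : List (List Bool) := [
  [false, false, false, false, false, false, false, false, false, false, false],
  [false, false, false, false, false, false, false, true, true, true, true],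
  [false, false, false, false, false, false, true, false, false, false, false],
  [false, false, false, false, false, false, true, true, true, true, true],
  [false, false, false, false, false, true, false, false, false, false, false],
  [false, false, false, false, false, true, false, true, true, true, true],
  [false, false, false, false, false, true, true, false, false, false, false],
  [false, false, false, false, false, true, true, true, true, true, true],
  [false, false, false, false, true, false, false, false, false, false, false],
  [false, false, false, false, true, false, false, true, true, true, true],
  [false, false, false, false, true, false, true, false, false, false, false],
  [false, false, false, false, true, false, true, true, true, true, true],
  [false, false, false, false, true, true, false, false, false, false, false],
  [false, false, false, false, true, true, false, true, true, true, true],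
  [false, false, false, false, true, true, true, false, false, false, false],
  [false, false, false, false, true, true, true, true, true, true, true],
  [false, false, false, true, false, false, false, false, false, false, false],
  [false, false, false, true, false, false, false, true, true, true, true],
  [false, false, false, true, false, false, true, false, false, false, false],
  [false, false, false, true, false, false, true, true, true, true, true],
  [false, false, false, true, false, true, false, false, false, false, false],
  [false, false, false, true, false, true, false, true, true, true, true],
  [false, false, false, true, false, true, true, false, false, false, false],
  [false, false, false, true, false, true, true, true, true, true, true],
  [false, false, false, true, true, false, false, false, false, false, false],
  [false, false, false, true, true, false, false, true, true, true, true],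
  [false, false, false, true, true, false, true, false, false, false, false],
  [false, false, false, true, true, false, true, true, true, true, true],
  [false, false, false, true, true, true, false, false, false, false, false],
  [false, false, false, true, true, true, false, true, true, true, true],
  [false, false, false, true, true, true, true, false, false, false, false],
  [false, false, false, true, true, true, true, true, true, true, true],
  [false, false, true, false, false, false, false, false, true, true, true],
  [false, false, true, false, false, false, false, true, false, false, false],
  [false, false, true, false, false, false, true, false, true, true, true],
  [false, false, true, false, false, false, true, true, false, false, false],
  [false, false, true, false, false, true, false, false, true, true, true],
  [false, false, true, false, false, true, false, true, false, false, false],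
  [false, false, true, false, false, true, true, false, true, true, true],
  [false, false, true, false, false, true, true, true, false, false, false],
  [false, false, true, false, true, false, false, false, true, true, true],
  [false, false, true, false, true, false, false, true, false, false, false],
  [false, false, true, false, true, false, true, false, true, true, true],
  [false, false, true, false, true, false, true, true, false, false, false],
  [false, false, true, false, true, true, false, false, true, true, true],
  [false, false, true, false, true, true, false, true, false, false, false],
  [false, false, true, false, true, true, true, false, true, true, true],
  [false, false, true, false, true, true, true, true, false, false, false],
  [false, false, true, true, false, false, false, false, true, true, true],
  [false, false, true, true, false, false, false, true, false, false, false],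
  [false, false, true, true, false, false, true, false, true, true, true],
  [false, false, true, true, false, false, true, true, false, false, false],
  [false, false, true, true, false, true, false, false, true, true, true],
  [false, false, true, true, false, true, false, true, false, false, false],
  [false, false, true, true, false, true, true, false, true, true, true],
  [false, false, true, true, false, true, true, true, false, false, false],
  [false, false, true, true, true, false, false, false, true, true, true],
  [false, false, true, true, true, false, false, true, false, false, false],
  [false, false, true, true, true, false, true, false, true, true, true],
  [false, false, true, true, true, false, true, true, false, false, false],
  [false, false, true, true, true, true, false, false, true, true, true],
  [false, false, true, true, true, true, false, true, false, false, false],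
  [false, false, true, true, true, true, true, false, true, true, true],
  [false, false, true, true, true, true, true, true, false, false, false],
  [false, true, false, false, false, false, false, false, false, true, false],
  [false, true, false, false, false, false, false, true, true, false, true],
  [false, true, false, false, false, false, true, false, false, true, false],
  [false, true, false, false, false, false, true, true, true, false, true],
  [false, true, false, false, false, true, false, false, false, true, false],
  [false, true, false, false, false, true, false, true, true, false, true],
  [false, true, false, false, false, true, true, false, false, true, false],
  [false, true, false, false, false, true, true, true, true, false, true],
  [false, true, false, false, true, false, false, false, false, true, false],
  [false, true, false, false, true, false, false, true, true, false, true],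
  [false, true, false, false, true, false, true, false, false, true, false],
  [false, true, false, false, true, false, true, true, true, false, true],
  [false, true, false, false, true, true, false, false, false, true, false],
  [false, true, false, false, true, true, false, true, true, false, true],
  [false, true, false, false, true, true, true, false, false, true, false],
  [false, true, false, false, true, true, true, true, true, false, true],
  [false, true, false, true, false, false, false, false, false, true, false],
  [false, true, false, true, false, false, false, true, true, false, true],
  [false, true, false, true, false, false, true, false, false, true, false],
  [false, true, false, true, false, false, true, true, true, false, true],
  [false, true, false, true, false, true, false, false, false, true, false],
  [false, true, false, true, false, true, false, true, true, false, true],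
  [false, true, false, true, false, true, true, false, false, true, false],
  [false, true, false, true, false, true, true, true, true, false, true],
  [false, true, false, true, true, false, false, false, false, true, false],
  [false, true, false, true, true, false, false, true, true, false, true],
  [false, true, false, true, true, false, true, false, false, true, false],
  [false, true, false, true, true, false, true, true, true, false, true],
  [false, true, false, true, true, true, false, false, false, true, false],
  [false, true, false, true, true, true, false, true, true, false, true],
  [false, true, false, true, true, true, true, false, false, true, false],
  [false, true, false, true, true, true, true, true, true, false, true],
  [false, true, true, false, false, false, false, false, true, true, false],
  [false, true, true, false, false, false, false, true, false, false, true],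
  [false, true, true, false, false, false, true, false, true, true, false],
  [false, true, true, false, false, false, true, true, false, false, true],
  [false, true, true, false, false, true, false, false, true, true, false],
  [false, true, true, false, false, true, false, true, false, false, true],
  [false, true, true, false, false, true, true, false, true, true, false],
  [false, true, true, false, false, true, true, true, false, false, true],
  [false, true, true, false, true, false, false, false, true, true, false],
  [false, true, true, false, true, false, false, true, false, false, true],
  [false, true, true, false, true, false, true, false, true, true, false],
  [false, true, true, false, true, false, true, true, false, false, true],
  [false, true, true, false, true, true, false, false, true, true, false],
  [false, true, true, false, true, true, false, true, false, false, true],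
  [false, true, true, false, true, true, true, false, true, true, false],
  [false, true, true, false, true, true, true, true, false, false, true],
  [false, true, true, true, false, false, false, false, true, true, false],
  [false, true, true, true, false, false, false, true, false, false, true],
  [false, true, true, true, false, false, true, false, true, true, false],
  [false, true, true, true, false, false, true, true, false, false, true],
  [false, true, true, true, false, true, false, false, true, true, false],
  [false, true, true, true, false, true, false, true, false, false, true],
  [false, true, true, true, false, true, true, false, true, true, false],
  [false, true, true, true, false, true, true, true, false, false, true],
  [false, true, true, true, true, false, false, false, true, true, false],
  [false, true, true, true, true, false, false, true, false, false, true],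
  [false, true, true, true, true, false, true, false, true, true, false],
  [false, true, true, true, true, false, true, true, false, false, true],
  [false, true, true, true, true, true, false, false, true, true, false],
  [false, true, true, true, true, true, false, true, false, false, true],
  [false, true, true, true, true, true, true, false, true, true, false],
  [false, true, true, true, true, true, true, true, false, false, true],
  [true, false, false, false, false, false, false, false, false, false, false],
  [true, false, false, false, false, false, false, true, true, true, true],
  [true, false, false, false, false, false, true, false, false, false, false],
  [true, false, false, false, false, false, true, true, true, true, true],
  [true, false, false, false, false, true, false, false, false, false, false],
  [true, false, false, false, false, true, false, true, true, true, true],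
  [true, false, false, false, false, true, true, false, false, false, false],
  [true, false, false, false, false, true, true, true, true, true, true],
  [true, false, false, false, true, false, false, false, false, false, false],
  [true, false, false, false, true, false, false, true, true, true, true],
  [true, false, false, false, true, false, true, false, false, false, false],
  [true, false, false, false, true, false, true, true, true, true, true],
  [true, false, false, false, true, true, false, false, false, false, false],
  [true, false, false, false, true, true, false, true, true, true, true],
  [true, false, false, false, true, true, true, false, false, false, false],
  [true, false, false, false, true, true, true, true, true, true, true],
  [true, false, false, true, false, false, false, false, false, false, false],
  [true, false, false, true, false, false, false, true, true, true, true],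
  [true, false, false, true, false, false, true, false, false, false, false],
  [true, false, false, true, false, false, true, true, true, true, true],
  [true, false, false, true, false, true, false, false, false, false, false],
  [true, false, false, true, false, true, false, true, true, true, true],
  [true, false, false, true, false, true, true, false, false, false, false],
  [true, false, false, true, false, true, true, true, true, true, true],
  [true, false, false, true, true, false, false, false, false, false, false],
  [true, false, false, true, true, false, false, true, true, true, true],
  [true, false, false, true, true, false, true, false, false, false, false],
  [true, false, false, true, true, false, true, true, true, true, true],
  [true, false, false, true, true, true, false, false, false, false, false],
  [true, false, false, true, true, true, false, true, true, true, true],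
  [true, false, false, true, true, true, true, false, false, false, false],
  [true, false, false, true, true, true, true, true, true, true, true],
  [true, false, true, false, false, false, false, false, true, true, true],
  [true, false, true, false, false, false, false, true, false, false, false],
  [true, false, true, false, false, false, true, false, true, true, true],
  [true, false, true, false, false, false, true, true, false, false, false],
  [true, false, true, false, false, true, false, false, true, true, true],
  [true, false, true, false, false, true, false, true, false, false, false],
  [true, false, true, false, false, true, true, false, true, true, true],
  [true, false, true, false, false, true, true, true, false, false, false],
  [true, false, true, false, true, false, false, false, true, true, true],
  [true, false, true, false, true, false, false, true, false, false, false],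
  [true, false, true, false, true, false, true, false, true, true, true],
  [true, false, true, false, true, false, true, true, false, false, false],
  [true, false, true, false, true, true, false, false, true, true, true],
  [true, false, true, false, true, true, false, true, false, false, false],
  [true, false, true, false, true, true, true, false, true, true, true],
  [true, false, true, false, true, true, true, true, false, false, false],
  [true, false, true, true, false, false, false, false, true, true, true],
  [true, false, true, true, false, false, false, true, false, false, false],
  [true, false, true, true, false, false, true, false, true, true, true],
  [true, false, true, true, false, false, true, true, false, false, false],
  [true, false, true, true, false, true, false, false, true, true, true],
  [true, false, true, true, false, true, false, true, false, false, false],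
  [true, false, true, true, false, true, true, false, true, true, true],
  [true, false, true, true, false, true, true, true, false, false, false],
  [true, false, true, true, true, false, false, false, true, true, true],
  [true, false, true, true, true, false, false, true, false, false, false],
  [true, false, true, true, true, false, true, false, true, true, true],
  [true, false, true, true, true, false, true, true, false, false, false],
  [true, false, true, true, true, true, false, false, true, true, true],
  [true, false, true, true, true, true, false, true, false, false, false],
  [true, false, true, true, true, true, true, false, true, true, true],
  [true, false, true, true, true, true, true, true, false, false, false],
  [true, true, false, false, false, false, false, false, false, true, false],
  [true, true, false, false, false, false, false, true, true, false, true],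
  [true, true, false, false, false, false, true, false, false, true, false],
  [true, true, false, false, false, false, true, true, true, false, true],
  [true, true, false, false, false, true, false, false, false, true, false],
  [true, true, false, false, false, true, false, true, true, false, true],
  [true, true, false, false, false, true, true, false, false, true, false],
  [true, true, false, false, false, true, true, true, true, false, true],
  [true, true, false, false, true, false, false, false, false, true, false],
  [true, true, false, false, true, false, false, true, true, false, true],
  [true, true, false, false, true, false, true, false, false, true, false],
  [true, true, false, false, true, false, true, true, true, false, true],
  [true, true, false, false, true, true, false, false, false, true, false],
  [true, true, false, false, true, true, false, true, true, false, true],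
  [true, true, false, false, true, true, true, false, false, true, false],
  [true, true, false, false, true, true, true, true, true, false, true],
  [true, true, false, true, false, false, false, false, false, true, false],
  [true, true, false, true, false, false, false, true, true, false, true],
  [true, true, false, true, false, false, true, false, false, true, false],
  [true, true, false, true, false, false, true, true, true, false, true],
  [true, true, false, true, false, true, false, false, false, true, false],
  [true, true, false, true, false, true, false, true, true, false, true],
  [true, true, false, true, false, true, true, false, false, true, false],
  [true, true, false, true, false, true, true, true, true, false, true],
  [true, true, false, true, true, false, false, false, false, true, false],
  [true, true, false, true, true, false, false, true, true, false, true],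
  [true, true, false, true, true, false, true, false, false, true, false],
  [true, true, false, true, true, false, true, true, true, false, true],
  [true, true, false, true, true, true, false, false, false, true, false],
  [true, true, false, true, true, true, false, true, true, false, true],
  [true, true, false, true, true, true, true, false, false, true, false],
  [true, true, false, true, true, true, true, true, true, false, true],
  [true, true, true, false, false, false, false, false, true, true, false],
  [true, true, true, false, false, false, false, true, false, false, true],
  [true, true, true, false, false, false, true, false, true, true, false],
  [true, true, true, false, false, false, true, true, false, false, true],
  [true, true, true, false, false, true, false, false, true, true, false],
  [true, true, true, false, false, true, false, true, false, false, true],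
  [true, true, true, false, false, true, true, false, true, true, false],
  [true, true, true, false, false, true, true, true, false, false, true],
  [true, true, true, false, true, false, false, false, true, true, false],
  [true, true, true, false, true, false, false, true, false, false, true],
  [true, true, true, false, true, false, true, false, true, true, false],
  [true, true, true, false, true, false, true, true, false, false, true],
  [true, true, true, false, true, true, false, false, true, true, false],
  [true, true, true, false, true, true, false, true, false, false, true],
  [true, true, true, false, true, true, true, false, true, true, false],
  [true, true, true, false, true, true, true, true, false, false, true],
  [true, true, true, true, false, false, false, false, true, true, false],
  [true, true, true, true, false, false, false, true, false, false, true],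
  [true, true, true, true, false, false, true, false, true, true, false],
  [true, true, true, true, false, false, true, true, false, false, true],
  [true, true, true, true, false, true, false, false, true, true, false],
  [true, true, true, true, false, true, false, true, false, false, true],
  [true, true, true, true, false, true, true, false, true, true, false],
  [true, true, true, true, false, true, true, true, false, false, true],
  [true, true, true, true, true, false, false, false, true, true, false],
  [true, true, true, true, true, false, false, true, false, false, true],
  [true, true, true, true, true, false, true, false, true, true, false],
  [true, true, true, true, true, false, true, true, false, false, true],
  [true, true, true, true, true, true, false, false, true, true, false],
  [true, true, true, true, true, true, false, true, false, false, true],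
  [true, true, true, true, true, true, true, false, true, true, false],
  [true, true, true, true, true, true, true, true, false, false, true]]


lemma RR_one : tr (1 : AutT) ∈ RR := by
  have h : tr (1 : AutT) =
      [false, false, false, false, false, false, false, false, false, false, false] := rfl
  rw [h]; decide

set_option maxRecDepth 4000 in
lemma RR_closed_A : ∀ t ∈ RR, rstep genA t ∈ RR := by decide
set_option maxRecDepth 4000 in
lemma RR_closed_B : ∀ t ∈ RR, rstep genB t ∈ RR := by decide
set_option maxRecDepth 4000 in
lemma RR_closed_C : ∀ t ∈ RR, rstep genC t ∈ RR := by decide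
set_option maxRecDepth 4000 in
lemma RR_closed_D : ∀ t ∈ RR, rstep genD t ∈ RR := by decide

def goodQ : List Bool → Bool
  | [_b0, b1, b2, _b3, _b4, _b5, _b6, p0, p1, p2, p3] =>
    !(b1 == false && b2 == true) || ((p3 == p1) && (p1 == p2) && (p0 != p3))
  | _ => true

set_option maxRecDepth 4000 in
lemma RR_good : ∀ t ∈ RR, goodQ t = true := by decide

lemma mem_RR {g : AutT} (hg : g ∈ Grigorchuk) : tr g ∈ RR := by
  induction hg using Subgroup.closure_induction_right with
  | one => exact RR_one
  | mul_right x hx y hy ih =>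
      rcases hy with rfl | rfl | rfl | rfl
      · rw [tr_mul]; exact RR_closed_A _ ih
      · rw [tr_mul]; exact RR_closed_B _ ih
      · rw [tr_mul]; exact RR_closed_C _ ih
      · rw [tr_mul]; exact RR_closed_D _ ih
  | mul_inv_cancel x hx y hy ih =>
      rcases hy with rfl | rfl | rfl | rfl
      · rw [genA_inv, tr_mul]; exact RR_closed_A _ ih
      · rw [genB_inv, tr_mul]; exact RR_closed_B _ ih
      · rw [genC_inv, tr_mul]; exact RR_closed_C _ ih
      · rw [genD_inv, tr_mul]; exact RR_closed_D _ ih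

end GrigAux


/-- For `g` in the Grigorchuk group, if `α₀(g) = 0` and `α₁(g) = 1`
then `β₀₀(g) ≠ β₁₁(g) = β₀₁(g) = β₁₀(g)` (mod 2). -/
theorem grigorchuk_beta_constraint_of_inactive_active
    (g : AutT) (hg : g ∈ Grigorchuk)
    (h0 : alpha g [false] = false) (h1 : alpha g [true] = true) :
    beta g true true = beta g false true ∧ beta g false true = beta g true false ∧ beta g false false ≠ beta g true true := by
  have key : GrigAux.tr g ∈ GrigAux.RR := GrigAux.mem_RR hg
  have hq := GrigAux.RR_good _ key
  have h0' : g [false] = false := h0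
  have h1' : g [true] = true := h1
  simp only [GrigAux.tr, GrigAux.goodQ, h0', h1'] at hq
  simp only [beta, Bool.not_true, Bool.not_false]
  simp at hq
  obtain ⟨⟨e1, e2⟩, e3⟩ := hq
  refine ⟨e1, e2, ?_⟩
  revert e3
  generalize xor (g [true, true]) (xor (g [true, false, false]) (g [true, false, true])) = T
  generalize g [false, false] = A
  generalize g [false, true, false] = B
  generalize g [false, true, true] = C
  cases A <;> cases B <;> cases C <;> cases T <;> simp
end

section
/- Let g be an element of the Grigorchuk group G. If α_0(g)=1 and α_1(g)=1, then β_00(g)=β_11(g), β_01(g)=β_10(g), and β_11(g)≠β_01(g) (modulo 2). -/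
open AutT

/-!
Multiplication transforms `β` like a cocycle: `β_{xy}(gh) = β_{xy}(g) + β_{g(xy)}(h)`, where
`g(xy)` is the image of the vertex `xy` under `g`. Consequently the elements `g` for which
`β_{xy}(g) - β_{11}(g)` equals a fixed function `betaOffset` of `(α₀(g), α₁(g))` form a subgroup
of `Aut(T)`, which contains `a, b, c, d` and hence `G`. When `α₀(g) = α₁(g) = 1` the offsets
at `00, 01, 10, 11` are `0, 1, 1, 0`.
-/

theorem Bool.xor_xor_xor_comm (a b c d : Bool) :
    ((a ^^ b) ^^ (c ^^ d)) = ((a ^^ c) ^^ (b ^^ d)) := by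
  decide +revert

instance : Std.Associative (· ^^ · : Bool → Bool → Bool) := ⟨Bool.xor_assoc⟩

instance : Std.Commutative (· ^^ · : Bool → Bool → Bool) := ⟨Bool.xor_comm⟩

namespace AutT

lemma mul_apply_singleton (g h : AutT) (x : Bool) :
    (g * h) [x] = (g [x] ^^ h [x ^^ g []]) := rfl

lemma mul_apply_pair (g h : AutT) (x y : Bool) :
    (g * h) [x, y] = (g [x, y] ^^ h [x ^^ g [], y ^^ g [x]]) := rfl

lemma mul_apply_triple (g h : AutT) (x y z : Bool) :
    (g * h) [x, y, z] = (g [x, y, z] ^^ h [x ^^ g [], y ^^ g [x], z ^^ g [x, y]]) := rfl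

lemma inv_apply_singleton (g : AutT) (x : Bool) : g⁻¹ [x] = g [x ^^ g []] := rfl

lemma beta_one (x y : Bool) : beta 1 x y = false := rfl

lemma beta_mul (g h : AutT) (x y : Bool) :
    beta (g * h) x y = (beta g x y ^^ beta h (x ^^ g []) (y ^^ g [x])) := by
  simp only [beta, mul_apply_pair, mul_apply_triple, Bool.not_xor]
  -- the activity of `g` at `x ȳ` only permutes the two children summed in `β`
  cases g [x, !y] <;> simp only [Bool.xor_false, Bool.true_xor, Bool.not_true] <;> ac_rfl

lemma beta_inv (g : AutT) (x y : Bool) :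
    beta g⁻¹ x y = beta g (x ^^ g []) (y ^^ g [x ^^ g []]) := by
  have h := beta_mul g⁻¹ g x y
  rwa [inv_mul_cancel, beta_one, inv_apply_nil, inv_apply_singleton, eq_comm,
    bne_eq_false_iff_eq] at h

def betaOffset (g : AutT) : Bool → Bool → Bool
  | false, false => g [true] && !g [false]
  | false, true => g [false] && g [true]
  | true, false => g [false]
  | true, true => false

lemma betaOffset_one (x y : Bool) : betaOffset 1 x y = false := by
  cases x <;> cases y <;> rfl

lemma betaOffset_mul (g h : AutT) (x y : Bool) :
    (betaOffset g x y ^^ betaOffset h (x ^^ g []) (y ^^ g [x])) =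
      (betaOffset h (true ^^ g []) (true ^^ g [true]) ^^ betaOffset (g * h) x y) := by
  cases x <;> cases y <;> simp only [betaOffset, mul_apply_singleton] <;>
    cases g [] <;> cases g [false] <;> cases g [true] <;>
    simp only [Bool.false_xor, Bool.true_xor, Bool.not_false, Bool.not_true] <;>
    cases h [false] <;> cases h [true] <;> rfl

lemma betaOffset_inv (g : AutT) (x y : Bool) :
    betaOffset g (x ^^ g []) (y ^^ g [x ^^ g []]) =
      (betaOffset g (true ^^ g []) (true ^^ g [true ^^ g []]) ^^ betaOffset g⁻¹ x y) := by
  have h := betaOffset_mul g⁻¹ g x y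
  rw [inv_mul_cancel, betaOffset_one, Bool.xor_false, inv_apply_nil, inv_apply_singleton,
    inv_apply_singleton] at h
  rw [← h, Bool.xor_right_comm, Bool.xor_self, Bool.false_xor]

def betaRelationSubgroup : Subgroup AutT where
  carrier := {g | ∀ x y, beta g x y = (beta g true true ^^ betaOffset g x y)}
  mul_mem' {g h} hg hh x y := by
    rw [beta_mul, beta_mul g h true true, hg x y, hh (x ^^ g []) (y ^^ g [x]),
      hh (true ^^ g []) (true ^^ g [true]), Bool.xor_xor_xor_comm, betaOffset_mul]
    ac_rfl
  one_mem' x y := by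
    cases x <;> cases y <;> rfl
  inv_mem' {g} hg x y := by
    rw [beta_inv, beta_inv g true true, hg, hg (true ^^ g []), betaOffset_inv, Bool.xor_assoc]

lemma mem_betaRelationSubgroup {g : AutT} :
    g ∈ betaRelationSubgroup ↔ ∀ x y, beta g x y = (beta g true true ^^ betaOffset g x y) :=
  Iff.rfl

lemma grigorchuk_le_betaRelationSubgroup : Grigorchuk ≤ betaRelationSubgroup := by
  refine (Subgroup.closure_le _).2 ?_
  rintro s (rfl | rfl | rfl | rfl) <;> rw [SetLike.mem_coe, mem_betaRelationSubgroup] <;> decide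

end AutT

/-- For `g` in the Grigorchuk group, if `α₀(g) = 1` and `α₁(g) = 1`
then `β₀₀(g) = β₁₁(g) ≠ β₀₁(g) = β₁₀(g)` (mod 2). -/
theorem grigorchuk_beta_constraint_of_active_active
    (g : AutT) (hg : g ∈ Grigorchuk)
    (h0 : alpha g [false] = true) (h1 : alpha g [true] = true) :
    beta g false false = beta g true true ∧ beta g false true = beta g true false ∧ beta g true true ≠ beta g false true := by
  have hβ := mem_betaRelationSubgroup.1 (grigorchuk_le_betaRelationSubgroup hg)
  rw [hβ false false, hβ false true, hβ true false]
  rw [alpha] at h0 h1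
  simp [betaOffset, h0, h1]
end

section
/- A binary tree automorphism g belongs to the closure of the Grigorchuk group G in the profinite group Aut(T) if and only if the distance from every section of g (at every vertex of T) to G in the metric space Aut(T) is at most 1/16. -/
namespace AutT

/-- The portrait of a tree automorphism, level by level: the vertices at level `n`
are encoded as functions `Fin n → Bool`. -/
def toLevels (g : AutT) : ∀ n : ℕ, (Fin n → Bool) → Bool := fun _ v => g (List.ofFn v)

lemma toLevels_injective : Function.Injective toLevels := by
  intro g h hgh
  funext u
  have := congrFun (congrFun hgh u.length) u.get
  simpa [toLevels, List.ofFn_get] using this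

/-- The natural metric on the group of binary rooted tree automorphisms:
the distance between two distinct automorphisms `g` and `h` is `2⁻ⁿ`, where `n` is the
largest integer such that `g` and `h` agree on all words of length `n` (equivalently,
the first level at which the portraits of `g` and `h` differ). -/
noncomputable instance : MetricSpace AutT :=
  MetricSpace.induced toLevels toLevels_injective
    (PiNat.metricSpace (E := fun n => (Fin n → Bool) → Bool))

end AutT

open AutT

namespace AutT

/-! ### Agreement up to a level -/

def agree (n : ℕ) (g h : AutT) : Prop := ∀ u : List Bool, u.length < n → g u = h u

lemma agree_refl (n : ℕ) (g : AutT) : agree n g g := fun _ _ => rfl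

lemma agree_symm {n g h} (H : agree n g h) : agree n h g := fun u hu => (H u hu).symm

lemma agree_trans {n} {g h k : AutT} (H1 : agree n g h) (H2 : agree n h k) : agree n g k :=
  fun u hu => (H1 u hu).trans (H2 u hu)

lemma agree_mono {m n g h} (hmn : m ≤ n) (H : agree n g h) : agree m g h :=
  fun u hu => H u (lt_of_lt_of_le hu hmn)

lemma agree_of_eq {n} {g h : AutT} (H : g = h) : agree n g h := H ▸ agree_refl n g

private lemma mulAux_congr : ∀ (u : List Bool) (g g' h h' : AutT),
    (∀ v : List Bool, v.length ≤ u.length → g v = g' v) →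
    (∀ v : List Bool, v.length ≤ u.length → h v = h' v) →
    mulAux u g h = mulAux u g' h'
  | [], g, g', h, h', hg, hh => by
      simp only [mulAux, hg [] (by simp), hh [] (by simp)]
  | x :: u, g, g', h, h', hg, hh => by
      have h0 : g [] = g' [] := hg [] (by simp)
      simp only [mulAux, h0]
      exact mulAux_congr u _ _ _ _
        (fun v hv => hg (x :: v) (by simpa using Nat.succ_le_succ hv))
        (fun v hv => hh (xor x (g' []) :: v) (by simpa using Nat.succ_le_succ hv))

private lemma invAux_congr : ∀ (u : List Bool) (g g' : AutT),
    (∀ v : List Bool, v.length ≤ u.length → g v = g' v) →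
    invAux u g = invAux u g'
  | [], g, g', hg => hg [] (by simp)
  | x :: u, g, g', hg => by
      have h0 : g [] = g' [] := hg [] (by simp)
      simp only [invAux, h0]
      exact invAux_congr u _ _
        (fun v hv => hg (xor x (g' []) :: v) (by simpa using Nat.succ_le_succ hv))

lemma agree_mul {n} {g g' h h' : AutT} (Hg : agree n g g') (Hh : agree n h h') :
    agree n (g * h) (g' * h') := by
  intro u hu
  exact mulAux_congr u g g' h h' (fun v hv => Hg v (lt_of_le_of_lt hv hu))
    (fun v hv => Hh v (lt_of_le_of_lt hv hu))

lemma agree_inv {n} {g g' : AutT} (Hg : agree n g g') : agree n g⁻¹ g'⁻¹ := by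
  intro u hu
  exact invAux_congr u g g' (fun v hv => Hg v (lt_of_le_of_lt hv hu))

/-! ### Sections of generators -/

lemma ext_sec {g h : AutT} (h0 : g [] = h []) (hs : ∀ x, sec g x = sec h x) : g = h := by
  funext u
  cases u with
  | nil => exact h0
  | cons x v => exact congrFun (hs x) v

lemma secA (x : Bool) : sec genA x = 1 := by
  funext u; cases x <;> rfl

lemma secB0 : sec genB false = genA := rfl
lemma secB1 : sec genB true = genC := rfl
lemma secC0 : sec genC false = genA := rfl
lemma secC1 : sec genC true = genD := rfl
lemma secD0 : sec genD false = 1 := by funext u; rfl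
lemma secD1 : sec genD true = genB := rfl

lemma genA_nil : genA [] = true := rfl
lemma genB_nil : genB [] = false := rfl
lemma genC_nil : genC [] = false := rfl
lemma genD_nil : genD [] = false := rfl

/-! ### Relations among the generators -/

private lemma rels (u : List Bool) :
    (genA * genA) u = false ∧ (genB * genB) u = false ∧ (genC * genC) u = false ∧
    (genD * genD) u = false ∧ (genB * genC) u = genD u ∧ (genC * genB) u = genD u ∧
    (genC * genD) u = genB u ∧ (genD * genC) u = genB u ∧ (genD * genB) u = genC u ∧
    (genB * genD) u = genC u := by
  induction u with
  | nil => exact ⟨rfl, rfl, rfl, rfl, rfl, rfl, rfl, rfl, rfl, rfl⟩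
  | cons x v ih =>
    obtain ⟨haa, hbb, hcc, hdd, hbc, hcb, hcd, hdc, hdb, hbd⟩ := ih
    have one1 : ((1 : AutT) * 1) v = false := by rw [one_mul]; rfl
    have amul1 : (genA * 1) v = genA v := by rw [mul_one]
    have one_a : ((1 : AutT) * genA) v = genA v := by rw [one_mul]
    refine ⟨?_, ?_, ?_, ?_, ?_, ?_, ?_, ?_, ?_, ?_⟩ <;> cases x
    · exact one1
    · exact one1
    · exact haa
    · exact hcc
    · exact haa
    · exact hdd
    · exact one1
    · exact hbb
    · exact haa
    · exact hcd
    · exact haa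
    · exact hdc
    · exact amul1
    · exact hdb
    · exact one_a
    · exact hbd
    · exact one_a
    · exact hbc
    · exact amul1
    · exact hcb

lemma relAA : genA * genA = 1 := funext fun u => (rels u).1
lemma relBB : genB * genB = 1 := funext fun u => (rels u).2.1
lemma relCC : genC * genC = 1 := funext fun u => (rels u).2.2.1
lemma relDD : genD * genD = 1 := funext fun u => (rels u).2.2.2.1
lemma relBC : genB * genC = genD := funext fun u => (rels u).2.2.2.2.1
lemma relCB : genC * genB = genD := funext fun u => (rels u).2.2.2.2.2.1
lemma relCD : genC * genD = genB := funext fun u => (rels u).2.2.2.2.2.2.1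
lemma relDC : genD * genC = genB := funext fun u => (rels u).2.2.2.2.2.2.2.1
lemma relDB : genD * genB = genC := funext fun u => (rels u).2.2.2.2.2.2.2.2.1
lemma relBD : genB * genD = genC := funext fun u => (rels u).2.2.2.2.2.2.2.2.2

lemma invA : genA⁻¹ = genA := inv_eq_of_mul_eq_one_right relAA
lemma invB : genB⁻¹ = genB := inv_eq_of_mul_eq_one_right relBB
lemma invC : genC⁻¹ = genC := inv_eq_of_mul_eq_one_right relCC
lemma invD : genD⁻¹ = genD := inv_eq_of_mul_eq_one_right relDD

end AutT
namespace AutT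

/-! ### Sections at arbitrary vertices, action -/

lemma secAt_nil (g : AutT) : secAt g [] = g := rfl

lemma secAt_cons (g : AutT) (x : Bool) (u : List Bool) :
    secAt g (x :: u) = secAt (sec g x) u := rfl

lemma act_nil (g : AutT) : act g [] = [] := rfl

lemma act_cons (g : AutT) (x : Bool) (u : List Bool) :
    act g (x :: u) = (xor (g []) x) :: act (sec g x) u := rfl

lemma secAt_mul : ∀ (u : List Bool) (g h : AutT),
    secAt (g * h) u = secAt g u * secAt h (act g u)
  | [], g, h => rfl
  | x :: u, g, h => by
      rw [secAt_cons, sec_mul, secAt_mul u, act_cons, secAt_cons, secAt_cons,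
        Bool.xor_comm x (g [])]

lemma secAt_inv : ∀ (u : List Bool) (g : AutT),
    secAt g⁻¹ u = (secAt g (act g⁻¹ u))⁻¹
  | [], g => rfl
  | x :: u, g => by
      rw [secAt_cons, sec_inv, secAt_inv u, act_cons, inv_apply_nil, secAt_cons,
        Bool.xor_comm x (g []), sec_inv]
      rw [Bool.xor_comm (g []) x]

/-! ### Membership of generators -/

lemma memA : genA ∈ Grigorchuk := Subgroup.subset_closure (by simp [Grigorchuk])
lemma memB : genB ∈ Grigorchuk := Subgroup.subset_closure (by simp [Grigorchuk])
lemma memC : genC ∈ Grigorchuk := Subgroup.subset_closure (by simp [Grigorchuk])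
lemma memD : genD ∈ Grigorchuk := Subgroup.subset_closure (by simp [Grigorchuk])

lemma sec_mem {g : AutT} (hg : g ∈ Grigorchuk) : ∀ x : Bool, sec g x ∈ Grigorchuk := by
  induction hg using Subgroup.closure_induction with
  | mem y hy =>
      simp only [Grigorchuk, Set.mem_insert_iff, Set.mem_singleton_iff] at hy
      rcases hy with rfl | rfl | rfl | rfl <;> intro x <;> cases x
      · rw [secA]; exact one_mem _
      · rw [secA]; exact one_mem _
      · rw [secB0]; exact memA
      · rw [secB1]; exact memC
      · rw [secC0]; exact memA
      · rw [secC1]; exact memD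
      · rw [secD0]; exact one_mem _
      · rw [secD1]; exact memB
  | one => intro x; rw [sec_one]; exact one_mem _
  | mul y z hy hz ihy ihz =>
      intro x; rw [sec_mul]; exact mul_mem (ihy x) (ihz _)
  | inv y hy ihy =>
      intro x; rw [sec_inv]; exact inv_mem (ihy _)

lemma secAt_mem : ∀ (u : List Bool) {g : AutT}, g ∈ Grigorchuk → secAt g u ∈ Grigorchuk
  | [], g, hg => hg
  | x :: u, g, hg => by
      rw [secAt_cons]; exact secAt_mem u (sec_mem hg x)

/-! ### Subtree embeddings -/

def emb (b : Bool) (g : AutT) : AutT := fun u =>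
  match u with
  | [] => false
  | c :: v => if c = b then g v else false

lemma emb_nil (b : Bool) (g : AutT) : emb b g [] = false := rfl

lemma sec_emb (b c : Bool) (g : AutT) :
    sec (emb b g) c = if c = b then g else 1 := by
  funext v
  cases b <;> cases c <;> simp [sec, emb, one_apply]

lemma emb_one (b : Bool) : emb b (1 : AutT) = 1 := by
  funext u
  cases u with
  | nil => rfl
  | cons c v => simp [emb, one_apply]

lemma emb_mul (b : Bool) (g h : AutT) : emb b (g * h) = emb b g * emb b h := by
  funext u
  cases u with
  | nil => rfl
  | cons c v =>
      rw [mul_apply_cons, sec_emb, emb_nil, Bool.xor_false, sec_emb]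
      by_cases hc : c = b
      · subst hc; rw [if_pos rfl, if_pos rfl]; simp [emb]
      · simp only [if_neg hc, one_mul, one_apply]; simp [emb, hc]

lemma emb_inv (b : Bool) (g : AutT) : emb b g⁻¹ = (emb b g)⁻¹ := by
  funext u
  cases u with
  | nil => rw [emb_nil, inv_apply_nil, emb_nil]
  | cons c v =>
      have : (emb b g)⁻¹ (c :: v) = sec (emb b g)⁻¹ c v := rfl
      rw [this, sec_inv, emb_nil, Bool.xor_false, sec_emb]
      by_cases hc : c = b
      · subst hc; rw [if_pos rfl]; simp [emb]
      · simp only [if_neg hc, inv_one, one_apply]; simp [emb, hc]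

lemma eq_emb {g k : AutT} (b : Bool) (h0 : g [] = false) (hs : sec g b = k)
    (ho : sec g (!b) = 1) : g = emb b k := by
  apply ext_sec
  · rw [h0]; rfl
  · intro x
    rw [sec_emb]
    by_cases hx : x = b
    · rw [if_pos hx, hx, hs]
    · rw [if_neg hx]
      have : x = !b := by cases x <;> cases b <;> simp_all
      rw [this, ho]

lemma conjA_emb (x : Bool) (k : AutT) :
    genA⁻¹ * emb x k * genA = emb (!x) k := by
  apply ext_sec
  · simp [mul_apply_nil, inv_apply_nil, emb_nil, genA_nil]
  · intro c
    rw [sec_mul, sec_mul, mul_apply_nil, inv_apply_nil, genA_nil, emb_nil, sec_inv,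
      genA_nil, secA, inv_one, one_mul, sec_emb, secA, mul_one, sec_emb, Bool.xor_true]
    cases c <;> cases x <;> simp

lemma conj_emb {H h : AutT} (x : Bool) (k : AutT) (h0 : H [] = false) (hx : sec H x = h) :
    H⁻¹ * emb x k * H = emb x (h⁻¹ * k * h) := by
  apply ext_sec
  · simp [mul_apply_nil, inv_apply_nil, emb_nil, h0]
  · intro c
    rw [sec_mul, sec_mul, mul_apply_nil, inv_apply_nil, h0, emb_nil, sec_inv, h0,
      Bool.xor_false, Bool.xor_false, Bool.xor_false, sec_emb, sec_emb]
    by_cases hc : c = x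
    · subst hc; rw [if_pos rfl, if_pos rfl, hx]
    · rw [if_neg hc, if_neg hc, mul_one, inv_mul_cancel]

/-! ### The lifting lemma -/

lemma lift_sec (x : Bool) {g : AutT} (hg : g ∈ Grigorchuk) :
    ∃ H, H ∈ Grigorchuk ∧ H [] = false ∧ sec H x = g := by
  induction hg using Subgroup.closure_induction with
  | mem y hy =>
      simp only [Grigorchuk, Set.mem_insert_iff, Set.mem_singleton_iff] at hy
      rcases hy with rfl | rfl | rfl | rfl <;> cases x
      · exact ⟨genB, memB, rfl, secB0⟩
      · refine ⟨genA * genB * genA, mul_mem (mul_mem memA memB) memA, rfl, ?_⟩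
        rw [sec_mul, sec_mul, mul_apply_nil, genA_nil, genB_nil, secA, secA,
          one_mul, mul_one]
        simpa using secB0
      · refine ⟨genA * genD * genA, mul_mem (mul_mem memA memD) memA, rfl, ?_⟩
        rw [sec_mul, sec_mul, mul_apply_nil, genA_nil, genD_nil, secA, secA,
          one_mul, mul_one]
        simpa using secD1
      · exact ⟨genD, memD, rfl, secD1⟩
      · refine ⟨genA * genB * genA, mul_mem (mul_mem memA memB) memA, rfl, ?_⟩
        rw [sec_mul, sec_mul, mul_apply_nil, genA_nil, genB_nil, secA, secA,
          one_mul, mul_one]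
        simpa using secB1
      · exact ⟨genB, memB, rfl, secB1⟩
      · refine ⟨genA * genC * genA, mul_mem (mul_mem memA memC) memA, rfl, ?_⟩
        rw [sec_mul, sec_mul, mul_apply_nil, genA_nil, genC_nil, secA, secA,
          one_mul, mul_one]
        simpa using secC1
      · exact ⟨genC, memC, rfl, secC1⟩
  | one => exact ⟨1, one_mem _, rfl, sec_one x⟩
  | mul y z hy hz ihy ihz =>
      obtain ⟨H1, m1, e1, s1⟩ := ihy
      obtain ⟨H2, m2, e2, s2⟩ := ihz
      refine ⟨H1 * H2, mul_mem m1 m2, ?_, ?_⟩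
      · rw [mul_apply_nil, e1, e2]; rfl
      · rw [sec_mul, e1, Bool.xor_false, s1, s2]
  | inv y hy ihy =>
      obtain ⟨H, m, e, s⟩ := ihy
      refine ⟨H⁻¹, inv_mem m, ?_, ?_⟩
      · rw [inv_apply_nil, e]
      · rw [sec_inv, e, Bool.xor_false, s]

end AutT
namespace AutT

/-! ### The branching subgroup -/

def tT : AutT := genA * genB * genA * genB

lemma memT : tT ∈ Grigorchuk := mul_mem (mul_mem (mul_mem memA memB) memA) memB

def Kt : Subgroup AutT := Subgroup.closure {x | ∃ g ∈ Grigorchuk, x = g⁻¹ * tT * g}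

lemma Kt_le : Kt ≤ Grigorchuk := by
  apply (Subgroup.closure_le _).mpr
  rintro x ⟨g, hg, rfl⟩
  exact mul_mem (mul_mem (inv_mem hg) memT) hg

lemma Kt_mem_t : tT ∈ Kt := by
  apply Subgroup.subset_closure
  exact ⟨1, one_mem _, by rw [inv_one, one_mul, mul_one]⟩

lemma Kt_conj {g κ : AutT} (hg : g ∈ Grigorchuk) (hκ : κ ∈ Kt) : g⁻¹ * κ * g ∈ Kt := by
  induction hκ using Subgroup.closure_induction with
  | mem y hy =>
      obtain ⟨h, hh, rfl⟩ := hy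
      have : g⁻¹ * (h⁻¹ * tT * h) * g = (h * g)⁻¹ * tT * (h * g) := by group
      rw [this]
      exact Subgroup.subset_closure ⟨h * g, mul_mem hh hg, rfl⟩
  | one => simpa using one_mem Kt
  | mul y z hy hz ihy ihz =>
      have : g⁻¹ * (y * z) * g = (g⁻¹ * y * g) * (g⁻¹ * z * g) := by group
      rw [this]; exact mul_mem ihy ihz
  | inv y hy ihy =>
      have : g⁻¹ * y⁻¹ * g = (g⁻¹ * y * g)⁻¹ := by group
      rw [this]; exact inv_mem ihy

/-! ### `(1, t) ∈ K` -/

lemma embT : tT * (genC * tT * genC) = emb true tT := by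
  apply eq_emb
  · rfl
  · simp only [tT, sec_mul, mul_apply_nil, genA_nil, genB_nil, genC_nil, genD_nil,
      secA, secB0, secB1, secC0, secC1, secD0, secD1, Bool.xor_false, Bool.xor_true,
      Bool.false_xor, Bool.true_xor, Bool.not_false, Bool.not_true, one_mul, mul_one]
    have h1 : genA * genC * (genD * (genA * genC) * genD) =
        genA * (genC * genD) * (genA * (genC * genD)) := by group
    rw [h1, relCD]
    group
  · simp only [tT, sec_mul, mul_apply_nil, genA_nil, genB_nil, genC_nil, genD_nil,
      secA, secB0, secB1, secC0, secC1, secD0, secD1, Bool.xor_false, Bool.xor_true,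
      Bool.false_xor, Bool.true_xor, Bool.not_false, Bool.not_true, one_mul, mul_one]
    have h2 : genC * genA * (genA * (genC * genA) * genA) =
        genC * (genA * genA) * (genC * (genA * genA)) := by group
    rw [h2, relAA, mul_one, relCC]

lemma Kt_embT : ∀ b : Bool, emb b tT ∈ Kt := by
  have h1 : emb true tT ∈ Kt := by
    rw [← embT]
    refine mul_mem Kt_mem_t ?_
    have : genC * tT * genC = genC⁻¹ * tT * genC := by rw [invC]
    rw [this]
    exact Kt_conj memC Kt_mem_t
  intro b
  cases b
  · have : emb false tT = genA⁻¹ * emb true tT * genA := by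
      rw [conjA_emb]; rfl
    rw [this]
    exact Kt_conj memA h1
  · exact h1

lemma Kt_emb {κ : AutT} (hκ : κ ∈ Kt) (b : Bool) : emb b κ ∈ Kt := by
  induction hκ using Subgroup.closure_induction with
  | mem y hy =>
      obtain ⟨g, hg, rfl⟩ := hy
      obtain ⟨H, HG, H0, Hs⟩ := lift_sec b hg
      rw [← conj_emb b tT H0 Hs]
      exact Kt_conj HG (Kt_embT b)
  | one => rw [emb_one]; exact one_mem _
  | mul y z hy hz ihy ihz => rw [emb_mul]; exact mul_mem ihy ihz
  | inv y hy ihy => rw [emb_inv]; exact inv_mem ihy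

end AutT
namespace AutT

/-! ### Finite data: transversal, witnesses and class tables -/

def L3 : List (List Bool) := [[], [false], [true], [false,false], [false,true], [true,false], [true,true]]

def L4 : List (List Bool) := L3 ++ [[false,false,false], [false,false,true], [false,true,false],
  [false,true,true], [true,false,false], [true,false,true], [true,true,false], [true,true,true]]

def agree3b (g h : AutT) : Bool := L3.all (fun u => g u == h u)
def agree4b (g h : AutT) : Bool := L4.all (fun u => g u == h u)

lemma mem_L4 : ∀ u : List Bool, u.length < 4 → u ∈ L4 := by
  intro u hu
  rcases u with _ | ⟨x, _ | ⟨y, _ | ⟨z, _ | ⟨w, v⟩⟩⟩⟩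
  · simp [L4, L3]
  · cases x <;> simp [L4, L3]
  · cases x <;> cases y <;> simp [L4, L3]
  · cases x <;> cases y <;> cases z <;> simp [L4, L3]
  · simp only [List.length_cons] at hu; omega

lemma mem_L3 : ∀ u : List Bool, u.length < 3 → u ∈ L3 := by
  intro u hu
  rcases u with _ | ⟨x, _ | ⟨y, _ | ⟨z, v⟩⟩⟩
  · simp [L3]
  · cases x <;> simp [L3]
  · cases x <;> cases y <;> simp [L3]
  · simp only [List.length_cons] at hu; omega

lemma agree4b_iff {g h : AutT} : agree4b g h = true ↔ agree 4 g h := by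
  constructor
  · intro H u hu
    rw [agree4b, List.all_eq_true] at H
    simpa using H u (mem_L4 u hu)
  · intro H
    rw [agree4b, List.all_eq_true]
    have hlen : ∀ u ∈ L4, u.length < 4 := by decide
    intro u hu
    simpa using H u (hlen u hu)

lemma agree3b_iff {g h : AutT} : agree3b g h = true ↔ agree 3 g h := by
  constructor
  · intro H u hu
    rw [agree3b, List.all_eq_true] at H
    simpa using H u (mem_L3 u hu)
  · intro H
    rw [agree3b, List.all_eq_true]
    have hlen : ∀ u ∈ L3, u.length < 3 := by decide
    intro u hu
    simpa using H u (hlen u hu)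

def RL : List AutT := [(1 : AutT), genA, genB, genC, genD, genA*genB, genA*genC, genA*genD, genC*genA, genD*genA, genA*genC*genA, genA*genD*genA, genC*genA*genC, genC*genA*genD, genA*genC*genA*genC, genA*genC*genA*genD]

def R (i : Fin 16) : AutT := RL.getD i.val 1

lemma R_zero : R 0 = 1 := rfl

lemma R_mem : ∀ i : Fin 16, R i ∈ Grigorchuk := by
  intro i
  fin_cases i
  · exact one_mem _
  · exact memA
  · exact memB
  · exact memC
  · exact memD
  · exact mul_mem memA memB
  · exact mul_mem memA memC
  · exact mul_mem memA memD
  · exact mul_mem memC memA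
  · exact mul_mem memD memA
  · exact mul_mem (mul_mem memA memC) memA
  · exact mul_mem (mul_mem memA memD) memA
  · exact mul_mem (mul_mem memC memA) memC
  · exact mul_mem (mul_mem memC memA) memD
  · exact mul_mem (mul_mem (mul_mem memA memC) memA) memC
  · exact mul_mem (mul_mem (mul_mem memA memC) memA) memD

def conjT (w : AutT) : AutT := w⁻¹ * tT * w

lemma conjT_mem {w : AutT} (hw : w ∈ Grigorchuk) : conjT w ∈ Kt :=
  Subgroup.subset_closure ⟨w, hw, rfl⟩

def kwOf (L : List (Fin 16)) : AutT := (L.map (fun m => conjT (R m))).prod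

lemma kwOf_mem (L : List (Fin 16)) : kwOf L ∈ Kt := by
  apply list_prod_mem
  intro x hx
  rw [List.mem_map] at hx
  obtain ⟨m, -, rfl⟩ := hx
  exact conjT_mem (R_mem m)

def ltabL : List (Fin 16) := [(0 : Fin 16), (1 : Fin 16), (2 : Fin 16), (3 : Fin 16), (4 : Fin 16), (5 : Fin 16), (6 : Fin 16), (7 : Fin 16), (8 : Fin 16), (9 : Fin 16), (10 : Fin 16), (11 : Fin 16), (12 : Fin 16), (13 : Fin 16), (14 : Fin 16), (15 : Fin 16), (1 : Fin 16), (0 : Fin 16), (5 : Fin 16), (6 : Fin 16), (7 : Fin 16), (2 : Fin 16), (3 : Fin 16), (4 : Fin 16), (10 : Fin 16), (11 : Fin 16), (8 : Fin 16), (9 : Fin 16), (14 : Fin 16), (15 : Fin 16), (12 : Fin 16), (13 : Fin 16), (2 : Fin 16), (5 : Fin 16), (0 : Fin 16), (4 : Fin 16), (3 : Fin 16), (1 : Fin 16), (7 : Fin 16), (6 : Fin 16), (9 : Fin 16), (8 : Fin 16), (11 : Fin 16), (10 : Fin 16), (13 : Fin 16), (12 : Fin 16), (15 : Fin 16), (14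 : Fin 16), (3 : Fin 16), (8 : Fin 16), (4 : Fin 16), (0 : Fin 16), (2 : Fin 16), (9 : Fin 16), (12 : Fin 16), (13 : Fin 16), (1 : Fin 16), (5 : Fin 16), (14 : Fin 16), (15 : Fin 16), (6 : Fin 16), (7 : Fin 16), (10 : Fin 16), (11 : Fin 16), (4 : Fin 16), (9 : Fin 16), (3 : Fin 16), (2 : Fin 16), (0 : Fin 16), (8 : Fin 16), (13 : Fin 16), (12 : Fin 16), (5 : Fin 16), (1 : Fin 16), (15 : Fin 16), (14 : Fin 16), (7 : Fin 16), (6 : Fin 16), (11 : Fin 16), (10 : Fin 16), (5 : Fin 16), (2 : Fin 16), (1 : Fin 16), (7 : Fin 16), (6 : Fin 16), (0 : Fin 16), (4 : Fin 16), (3 : Fin 16), (11 : Fin 16), (10 : Fin 16), (9 : Fin 16), (8 : Fin 16), (15 : Fin 16), (14 : Fin 16), (13 : Fin 16), (12 : Fin 16), (6 : Fin 16), (10 : Fin 16), (7 : Fin 16), (1 : Fin 16), (5 : Fin 16), (11 : Fin 16), (14 : Fin 16), (15 : Fin 16), (0 : Fin 16), (2 : Fin 16), (12 : Fin 16), (13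 : Fin 16), (3 : Fin 16), (4 : Fin 16), (8 : Fin 16), (9 : Fin 16), (7 : Fin 16), (11 : Fin 16), (6 : Fin 16), (5 : Fin 16), (1 : Fin 16), (10 : Fin 16), (15 : Fin 16), (14 : Fin 16), (2 : Fin 16), (0 : Fin 16), (13 : Fin 16), (12 : Fin 16), (4 : Fin 16), (3 : Fin 16), (9 : Fin 16), (8 : Fin 16), (8 : Fin 16), (3 : Fin 16), (9 : Fin 16), (12 : Fin 16), (13 : Fin 16), (4 : Fin 16), (0 : Fin 16), (2 : Fin 16), (14 : Fin 16), (15 : Fin 16), (1 : Fin 16), (5 : Fin 16), (10 : Fin 16), (11 : Fin 16), (6 : Fin 16), (7 : Fin 16), (9 : Fin 16), (4 : Fin 16), (8 : Fin 16), (13 : Fin 16), (12 : Fin 16), (3 : Fin 16), (2 : Fin 16), (0 : Fin 16), (15 : Fin 16), (14 : Fin 16), (5 : Fin 16), (1 : Fin 16), (11 : Fin 16), (10 : Fin 16), (7 : Fin 16), (6 : Fin 16), (10 : Fin 16), (6 : Fin 16), (11 : Fin 16), (14 : Fin 16), (15 : Fin 16), (7 : Fin 16), (1 : Fin 16), (5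 : Fin 16), (12 : Fin 16), (13 : Fin 16), (0 : Fin 16), (2 : Fin 16), (8 : Fin 16), (9 : Fin 16), (3 : Fin 16), (4 : Fin 16), (11 : Fin 16), (7 : Fin 16), (10 : Fin 16), (15 : Fin 16), (14 : Fin 16), (6 : Fin 16), (5 : Fin 16), (1 : Fin 16), (13 : Fin 16), (12 : Fin 16), (2 : Fin 16), (0 : Fin 16), (9 : Fin 16), (8 : Fin 16), (4 : Fin 16), (3 : Fin 16), (12 : Fin 16), (14 : Fin 16), (13 : Fin 16), (8 : Fin 16), (9 : Fin 16), (15 : Fin 16), (10 : Fin 16), (11 : Fin 16), (3 : Fin 16), (4 : Fin 16), (6 : Fin 16), (7 : Fin 16), (0 : Fin 16), (2 : Fin 16), (1 : Fin 16), (5 : Fin 16), (13 : Fin 16), (15 : Fin 16), (12 : Fin 16), (9 : Fin 16), (8 : Fin 16), (14 : Fin 16), (11 : Fin 16), (10 : Fin 16), (4 : Fin 16), (3 : Fin 16), (7 : Fin 16), (6 : Fin 16), (2 : Fin 16), (0 : Fin 16), (5 : Fin 16), (1 : Fin 16), (14 : Fin 16), (12 : Fin 16), (15 : Fin 16), (10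 : Fin 16), (11 : Fin 16), (13 : Fin 16), (8 : Fin 16), (9 : Fin 16), (6 : Fin 16), (7 : Fin 16), (3 : Fin 16), (4 : Fin 16), (1 : Fin 16), (5 : Fin 16), (0 : Fin 16), (2 : Fin 16), (15 : Fin 16), (13 : Fin 16), (14 : Fin 16), (11 : Fin 16), (10 : Fin 16), (12 : Fin 16), (9 : Fin 16), (8 : Fin 16), (7 : Fin 16), (6 : Fin 16), (4 : Fin 16), (3 : Fin 16), (5 : Fin 16), (1 : Fin 16), (2 : Fin 16), (0 : Fin 16)]
def ltab (i j : Fin 16) : Fin 16 := ltabL.getD (i.val * 16 + j.val) 0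
def kwLL : List (List (Fin 16)) := [[], [], [], [], [], [], [], [], [], [], [], [], [], [], [], [], [], [], [], [], [], [], [], [], [], [], [], [], [], [], [], [], [], [(1 : Fin 16)], [], [], [], [(0 : Fin 16)], [(4 : Fin 16)], [(3 : Fin 16)], [], [], [(9 : Fin 16)], [(8 : Fin 16)], [(4 : Fin 16)], [(3 : Fin 16)], [(3 : Fin 16), (15 : Fin 16)], [(3 : Fin 16), (15 : Fin 16)], [], [], [], [], [], [(0 : Fin 16)], [], [], [], [(1 : Fin 16)], [(0 : Fin 16), (14 : Fin 16)], [(13 : Fin 16)], [], [], [(0 : Fin 16), (14 : Fin 16)], [(15 : Fin 16)], [], [], [], [], [], [(0 : Fin 16)], [(4 : Fin 16)], [(3 : Fin 16)], [(1 : Fin 16)], [], [(4 : Fin 16), (1 : Fin 16)], [(3 : Fin 16)], [(4 : Fin 16)], [(3 : Fin 16)], [(4 : Fin 16)], [(0 : Fin 16), (3 : Fin 16)], [], [(1 : Fin 16)], [], [], [], [(0 : Fin 16)], [(4 : Fin 16)], [(3 : Fin 16)], [], [], [(9 : Fin 16)], [(8 : Fin 16)], [(4 : Fin 16)], [(3 :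 Fin 16)], [(3 : Fin 16), (15 : Fin 16)], [(3 : Fin 16), (15 : Fin 16)], [], [], [], [], [], [(0 : Fin 16)], [], [], [], [(1 : Fin 16)], [(0 : Fin 16), (14 : Fin 16)], [(13 : Fin 16)], [], [], [(0 : Fin 16), (14 : Fin 16)], [(15 : Fin 16)], [], [], [], [], [], [(0 : Fin 16)], [(4 : Fin 16)], [(3 : Fin 16)], [(1 : Fin 16)], [], [(4 : Fin 16), (1 : Fin 16)], [(3 : Fin 16)], [(4 : Fin 16)], [(3 : Fin 16)], [(4 : Fin 16)], [(0 : Fin 16), (3 : Fin 16)], [], [], [(0 : Fin 16)], [], [], [], [], [], [(0 : Fin 16), (14 : Fin 16)], [(13 : Fin 16)], [], [(1 : Fin 16)], [(0 : Fin 16), (14 : Fin 16)], [(15 : Fin 16)], [], [], [], [], [(0 : Fin 16)], [(4 : Fin 16)], [(3 : Fin 16)], [], [], [], [(4 : Fin 16), (1 : Fin 16)], [(3 : Fin 16)], [(1 : Fin 16)], [], [(4 : Fin 16)], [(0 : Fin 16), (3 : Fin 16)], [(4 : Fin 16)], [(3 : Fin 16)], [], [], [(0 : Fin 16)], [], [],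 [], [], [], [(0 : Fin 16), (14 : Fin 16)], [(13 : Fin 16)], [], [(1 : Fin 16)], [(0 : Fin 16), (14 : Fin 16)], [(15 : Fin 16)], [], [], [], [], [(0 : Fin 16)], [(4 : Fin 16)], [(3 : Fin 16)], [], [], [], [(4 : Fin 16), (1 : Fin 16)], [(3 : Fin 16)], [(1 : Fin 16)], [], [(4 : Fin 16)], [(0 : Fin 16), (3 : Fin 16)], [(4 : Fin 16)], [(3 : Fin 16)], [], [(0 : Fin 16), (14 : Fin 16)], [], [], [(0 : Fin 16)], [(1 : Fin 16), (15 : Fin 16)], [(0 : Fin 16), (14 : Fin 16)], [(15 : Fin 16)], [], [(1 : Fin 16)], [(0 : Fin 16), (14 : Fin 16)], [(13 : Fin 16)], [], [], [(0 : Fin 16), (14 : Fin 16)], [(1 : Fin 16), (15 : Fin 16)], [], [(13 : Fin 16)], [], [(0 : Fin 16)], [], [(12 : Fin 16)], [(4 : Fin 16), (12 : Fin 16)], [(8 : Fin 16)], [(1 : Fin 16)], [], [(4 : Fin 16), (1 : Fin 16)], [(3 : Fin 16)], [(4 : Fin 16)], [(3 : Fin 16)], [(1 : Fin 16), (4 :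 Fin 16)], [(0 : Fin 16), (3 : Fin 16)], [], [(0 : Fin 16), (14 : Fin 16)], [], [], [(0 : Fin 16)], [(1 : Fin 16), (15 : Fin 16)], [(0 : Fin 16), (14 : Fin 16)], [(15 : Fin 16)], [], [(1 : Fin 16)], [(0 : Fin 16), (14 : Fin 16)], [(13 : Fin 16)], [], [], [(0 : Fin 16), (14 : Fin 16)], [(1 : Fin 16), (15 : Fin 16)], [], [(13 : Fin 16)], [], [(0 : Fin 16)], [], [(12 : Fin 16)], [(4 : Fin 16), (12 : Fin 16)], [(8 : Fin 16)], [(1 : Fin 16)], [], [(4 : Fin 16), (1 : Fin 16)], [(3 : Fin 16)], [(4 : Fin 16)], [(3 : Fin 16)], [(1 : Fin 16), (4 : Fin 16)], [(0 : Fin 16), (3 : Fin 16)]]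
def kw (i j : Fin 16) : AutT := kwOf (kwLL.getD (i.val * 16 + j.val) [])
lemma kw_mem (i j : Fin 16) : kw i j ∈ Kt := kwOf_mem _
def kclsL : List (Fin 8) := [(0 : Fin 8), (0 : Fin 8), (0 : Fin 8), (0 : Fin 8), (0 : Fin 8), (0 : Fin 8), (0 : Fin 8), (0 : Fin 8), (0 : Fin 8), (0 : Fin 8), (0 : Fin 8), (0 : Fin 8), (0 : Fin 8), (0 : Fin 8), (0 : Fin 8), (0 : Fin 8), (0 : Fin 8), (0 : Fin 8), (0 : Fin 8), (0 : Fin 8), (0 : Fin 8), (0 : Fin 8), (0 : Fin 8), (0 : Fin 8), (0 : Fin 8), (0 : Fin 8), (0 : Fin 8), (0 : Fin 8), (0 : Fin 8), (0 : Fin 8), (0 : Fin 8), (0 : Fin 8), (0 : Fin 8), (5 : Fin 8), (0 : Fin 8), (0 : Fin 8), (0 : Fin 8), (6 : Fin 8), (7 : Fin 8), (4 : Fin 8), (0 : Fin 8), (0 : Fin 8), (7 : Fin 8), (4 : Fin 8), (7 : Fin 8), (4 : Fin 8), (1 : Fin 8), (1 : Fin 8), (0 : Fin 8), (0 : Fin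 8), (0 : Fin 8), (0 : Fin 8), (0 : Fin 8), (6 : Fin 8), (0 : Fin 8), (0 : Fin 8), (0 : Fin 8), (5 : Fin 8), (0 : Fin 8), (5 : Fin 8), (0 : Fin 8), (0 : Fin 8), (0 : Fin 8), (6 : Fin 8), (0 : Fin 8), (0 : Fin 8), (0 : Fin 8), (0 : Fin 8), (0 : Fin 8), (6 : Fin 8), (7 : Fin 8), (4 : Fin 8), (5 : Fin 8), (0 : Fin 8), (1 : Fin 8), (4 : Fin 8), (7 : Fin 8), (4 : Fin 8), (7 : Fin 8), (1 : Fin 8), (0 : Fin 8), (5 : Fin 8), (0 : Fin 8), (0 : Fin 8), (0 : Fin 8), (6 : Fin 8), (7 : Fin 8), (4 : Fin 8), (0 : Fin 8), (0 : Fin 8), (7 : Fin 8), (4 : Fin 8), (7 : Fin 8), (4 : Fin 8), (1 : Fin 8), (1 : Fin 8), (0 : Fin 8), (0 : Fin 8), (0 : Fin 8), (0 : Fin 8), (0 : Fin 8), (6 : Fin 8), (0 : Fin 8), (0 : Fin 8), (0 : Fin 8), (5 : Fin 8), (0 : Fin 8), (5 : Fin 8), (0 : Fin 8), (0 : Fin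 8), (0 : Fin 8), (6 : Fin 8), (0 : Fin 8), (0 : Fin 8), (0 : Fin 8), (0 : Fin 8), (0 : Fin 8), (6 : Fin 8), (7 : Fin 8), (4 : Fin 8), (5 : Fin 8), (0 : Fin 8), (1 : Fin 8), (4 : Fin 8), (7 : Fin 8), (4 : Fin 8), (7 : Fin 8), (1 : Fin 8), (0 : Fin 8), (0 : Fin 8), (6 : Fin 8), (0 : Fin 8), (0 : Fin 8), (0 : Fin 8), (0 : Fin 8), (0 : Fin 8), (0 : Fin 8), (5 : Fin 8), (0 : Fin 8), (5 : Fin 8), (0 : Fin 8), (6 : Fin 8), (0 : Fin 8), (0 : Fin 8), (0 : Fin 8), (0 : Fin 8), (6 : Fin 8), (7 : Fin 8), (4 : Fin 8), (0 : Fin 8), (0 : Fin 8), (0 : Fin 8), (1 : Fin 8), (4 : Fin 8), (5 : Fin 8), (0 : Fin 8), (7 : Fin 8), (1 : Fin 8), (7 : Fin 8), (4 : Fin 8), (0 : Fin 8), (0 : Fin 8), (6 : Fin 8), (0 : Fin 8), (0 : Fin 8), (0 : Fin 8), (0 : Fin 8), (0 : Fin 8), (0 : Fin 8), (5 : Fin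 8), (0 : Fin 8), (5 : Fin 8), (0 : Fin 8), (6 : Fin 8), (0 : Fin 8), (0 : Fin 8), (0 : Fin 8), (0 : Fin 8), (6 : Fin 8), (7 : Fin 8), (4 : Fin 8), (0 : Fin 8), (0 : Fin 8), (0 : Fin 8), (1 : Fin 8), (4 : Fin 8), (5 : Fin 8), (0 : Fin 8), (7 : Fin 8), (1 : Fin 8), (7 : Fin 8), (4 : Fin 8), (0 : Fin 8), (0 : Fin 8), (0 : Fin 8), (0 : Fin 8), (6 : Fin 8), (0 : Fin 8), (0 : Fin 8), (6 : Fin 8), (0 : Fin 8), (5 : Fin 8), (0 : Fin 8), (5 : Fin 8), (0 : Fin 8), (0 : Fin 8), (0 : Fin 8), (0 : Fin 8), (0 : Fin 8), (5 : Fin 8), (0 : Fin 8), (6 : Fin 8), (0 : Fin 8), (6 : Fin 8), (2 : Fin 8), (4 : Fin 8), (5 : Fin 8), (0 : Fin 8), (1 : Fin 8), (4 : Fin 8), (7 : Fin 8), (4 : Fin 8), (1 : Fin 8), (1 : Fin 8), (0 : Fin 8), (0 : Fin 8), (0 : Fin 8), (0 : Fin 8), (6 : Fin 8), (0 : Fin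 8), (0 : Fin 8), (6 : Fin 8), (0 : Fin 8), (5 : Fin 8), (0 : Fin 8), (5 : Fin 8), (0 : Fin 8), (0 : Fin 8), (0 : Fin 8), (0 : Fin 8), (0 : Fin 8), (5 : Fin 8), (0 : Fin 8), (6 : Fin 8), (0 : Fin 8), (6 : Fin 8), (2 : Fin 8), (4 : Fin 8), (5 : Fin 8), (0 : Fin 8), (1 : Fin 8), (4 : Fin 8), (7 : Fin 8), (4 : Fin 8), (1 : Fin 8), (1 : Fin 8)]
def kcls (i j : Fin 16) : Fin 8 := kclsL.getD (i.val * 16 + j.val) 0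

def itabL : List (Fin 16) := [(0 : Fin 16), (1 : Fin 16), (2 : Fin 16), (3 : Fin 16), (4 : Fin 16), (5 : Fin 16), (8 : Fin 16), (9 : Fin 16), (6 : Fin 16), (7 : Fin 16), (10 : Fin 16), (11 : Fin 16), (12 : Fin 16), (13 : Fin 16), (14 : Fin 16), (15 : Fin 16)]
def itab (i : Fin 16) : Fin 16 := itabL.getD i.val 0
def kwiLL : List (List (Fin 16)) := [[], [], [], [], [], [(1 : Fin 16)], [], [], [], [], [], [], [], [(4 : Fin 16)], [(0 : Fin 16), (14 : Fin 16)], [(4 : Fin 16), (1 : Fin 16)]]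
def kwi (i : Fin 16) : AutT := kwOf (kwiLL.getD i.val [])
lemma kwi_mem (i : Fin 16) : kwi i ∈ Kt := kwOf_mem _
def kiclsL : List (Fin 8) := [(0 : Fin 8), (0 : Fin 8), (0 : Fin 8), (0 : Fin 8), (0 : Fin 8), (5 : Fin 8), (0 : Fin 8), (0 : Fin 8), (0 : Fin 8), (0 : Fin 8), (0 : Fin 8), (0 : Fin 8), (0 : Fin 8), (7 : Fin 8), (0 : Fin 8), (1 : Fin 8)]
def kicls (i : Fin 16) : Fin 8 := kiclsL.getD i.val 0

def ctabL : List (Fin 8) := [(0 : Fin 8), (1 : Fin 8), (2 : Fin 8), (3 : Fin 8), (4 : Fin 8), (5 : Fin 8), (6 : Fin 8), (7 : Fin 8), (0 : Fin 8), (2 : Fin 8), (1 : Fin 8), (3 : Fin 8), (4 : Fin 8), (6 : Fin 8), (5 : Fin 8), (7 : Fin 8), (0 : Fin 8), (1 : Fin 8), (2 : Fin 8), (3 : Fin 8), (7 : Fin 8), (6 : Fin 8), (5 : Fin 8), (4 : Fin 8), (0 : Fin 8), (1 : Fin 8), (2 : Fin 8), (3 : Fin 8), (6 : Fin 8), (7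 : Fin 8), (4 : Fin 8), (5 : Fin 8), (0 : Fin 8), (1 : Fin 8), (2 : Fin 8), (3 : Fin 8), (5 : Fin 8), (4 : Fin 8), (7 : Fin 8), (6 : Fin 8), (0 : Fin 8), (2 : Fin 8), (1 : Fin 8), (3 : Fin 8), (7 : Fin 8), (5 : Fin 8), (6 : Fin 8), (4 : Fin 8), (0 : Fin 8), (2 : Fin 8), (1 : Fin 8), (3 : Fin 8), (6 : Fin 8), (4 : Fin 8), (7 : Fin 8), (5 : Fin 8), (0 : Fin 8), (2 : Fin 8), (1 : Fin 8), (3 : Fin 8), (5 : Fin 8), (7 : Fin 8), (4 : Fin 8), (6 : Fin 8), (0 : Fin 8), (2 : Fin 8), (1 : Fin 8), (3 : Fin 8), (5 : Fin 8), (7 : Fin 8), (4 : Fin 8), (6 : Fin 8), (0 : Fin 8), (2 : Fin 8), (1 : Fin 8), (3 : Fin 8), (6 : Fin 8), (4 : Fin 8), (7 : Fin 8), (5 : Fin 8), (0 : Fin 8), (1 : Fin 8), (2 : Fin 8), (3 : Fin 8), (5 : Fin 8), (4 : Fin 8), (7 : Fin 8), (6 : Fin 8), (0 : Fin 8), (1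 : Fin 8), (2 : Fin 8), (3 : Fin 8), (6 : Fin 8), (7 : Fin 8), (4 : Fin 8), (5 : Fin 8), (0 : Fin 8), (2 : Fin 8), (1 : Fin 8), (3 : Fin 8), (7 : Fin 8), (5 : Fin 8), (6 : Fin 8), (4 : Fin 8), (0 : Fin 8), (2 : Fin 8), (1 : Fin 8), (3 : Fin 8), (4 : Fin 8), (6 : Fin 8), (5 : Fin 8), (7 : Fin 8), (0 : Fin 8), (1 : Fin 8), (2 : Fin 8), (3 : Fin 8), (7 : Fin 8), (6 : Fin 8), (5 : Fin 8), (4 : Fin 8), (0 : Fin 8), (1 : Fin 8), (2 : Fin 8), (3 : Fin 8), (4 : Fin 8), (5 : Fin 8), (6 : Fin 8), (7 : Fin 8)]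
def ctab (j : Fin 16) (s : Fin 8) : Fin 8 := ctabL.getD (j.val * 8 + s.val) 0
def mtabL : List (Fin 8) := [(0 : Fin 8), (1 : Fin 8), (2 : Fin 8), (3 : Fin 8), (4 : Fin 8), (5 : Fin 8), (6 : Fin 8), (7 : Fin 8), (1 : Fin 8), (0 : Fin 8), (3 : Fin 8), (2 : Fin 8), (5 : Fin 8), (4 : Fin 8), (7 : Fin 8), (6 : Fin 8), (2 : Fin 8), (3 : Fin 8), (0 : Fin 8), (1 : Fin 8), (6 : Fin 8), (7 : Fin 8), (4 : Fin 8), (5 : Fin 8), (3 : Fin 8), (2 : Fin 8), (1 : Fin 8), (0 : Fin 8), (7 : Fin 8), (6 : Fin 8), (5 : Fin 8), (4 : Fin 8), (4 : Fin 8), (5 : Fin 8), (6 : Fin 8), (7 : Fin 8), (3 : Fin 8), (2 : Fin 8), (1 : Fin 8), (0 : Fin 8), (5 : Fin 8), (4 : Fin 8), (7 : Fin 8), (6 : Fin 8), (2 : Fin 8), (3 : Fin 8), (0 : Fin 8), (1 : Fin 8), (6 : Fin 8), (7 : Fin 8), (4 : Fin 8), (5 : Fin 8), (1 : Fin 8),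 (0 : Fin 8), (3 : Fin 8), (2 : Fin 8), (7 : Fin 8), (6 : Fin 8), (5 : Fin 8), (4 : Fin 8), (0 : Fin 8), (1 : Fin 8), (2 : Fin 8), (3 : Fin 8)]
def mtab (s s' : Fin 8) : Fin 8 := mtabL.getD (s.val * 8 + s'.val) 0
def invtabL : List (Fin 8) := [(0 : Fin 8), (1 : Fin 8), (2 : Fin 8), (3 : Fin 8), (7 : Fin 8), (6 : Fin 8), (5 : Fin 8), (4 : Fin 8)]
def invtab (s : Fin 8) : Fin 8 := invtabL.getD s.val 0

def p3L : List (List (List Bool)) := [[], [[true, false], [true, true]], [[false, false], [false, true]], [[false, false], [false, true], [true, false], [true, true]], [[false], [true], [false, true], [true, true]], [[false], [true], [false, true], [true, false]], [[false], [true], [false, false], [true, true]], [[false], [true], [false, false], [true, false]]]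
def p3 (s : Fin 8) : AutT := fun u => decide (u ∈ p3L.getD s.val [])

set_option maxRecDepth 100000
set_option maxHeartbeats 4000000

theorem T1 : ∀ i j : Fin 16, agree4b (R i * R j) (R (ltab i j) * kw i j) = true := by decide
theorem T1c : ∀ i j : Fin 16, agree3b (kw i j) (p3 (kcls i j)) = true := by decide
theorem T2 : ∀ i : Fin 16, agree4b (R i)⁻¹ (R (itab i) * kwi i) = true := by decide
theorem T2c : ∀ i : Fin 16, agree3b (kwi i) (p3 (kicls i)) = true := by decide
theorem T5 : ∀ (j : Fin 16) (s : Fin 8), agree3b ((R j)⁻¹ * (p3 s * R j)) (p3 (ctab j s)) = true := by decide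
theorem T6 : ∀ s s' : Fin 8, agree3b (p3 s * p3 s') (p3 (mtab s s')) = true := by decide
theorem T7 : ∀ s : Fin 8, agree3b (p3 s)⁻¹ (p3 (invtab s)) = true := by decide
theorem T8 : ∀ (i : Fin 16) (s : Fin 8), i ≠ 0 → agree3b 1 (R i * p3 s) = false := by decide
theorem Tgen : agree4b genA (R 1 * kwOf []) = true ∧ agree4b genB (R 2 * kwOf []) = true ∧
    agree4b genC (R 3 * kwOf []) = true ∧ agree4b genD (R 4 * kwOf []) = true := by decide
theorem Tone : agree3b (kwOf []) (p3 0) = true := by decide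

end AutT
namespace AutT

/-! ### The coset-decomposition invariant -/

def GoodData (g : AutT) : Prop :=
  ∃ (i : Fin 16) (s : Fin 8) (κ : AutT), κ ∈ Kt ∧ agree 3 κ (p3 s) ∧ agree 4 g (R i * κ)

theorem main_ci {g : AutT} (hg : g ∈ Grigorchuk) : GoodData g := by
  induction hg using Subgroup.closure_induction with
  | mem y hy =>
      simp only [Grigorchuk, Set.mem_insert_iff, Set.mem_singleton_iff] at hy
      obtain ⟨TA, TB, TC, TD⟩ := Tgen
      rcases hy with rfl | rfl | rfl | rfl
      · exact ⟨1, 0, kwOf [], kwOf_mem _, agree3b_iff.mp Tone, agree4b_iff.mp TA⟩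
      · exact ⟨2, 0, kwOf [], kwOf_mem _, agree3b_iff.mp Tone, agree4b_iff.mp TB⟩
      · exact ⟨3, 0, kwOf [], kwOf_mem _, agree3b_iff.mp Tone, agree4b_iff.mp TC⟩
      · exact ⟨4, 0, kwOf [], kwOf_mem _, agree3b_iff.mp Tone, agree4b_iff.mp TD⟩
  | one =>
      refine ⟨0, 0, kwOf [], kwOf_mem _, agree3b_iff.mp Tone, ?_⟩
      have : R 0 * kwOf [] = 1 := by rw [R_zero, one_mul]; rfl
      rw [this]
      exact agree_refl _ _
  | mul g g' hg hg' ih ih' =>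
      obtain ⟨i, s, κ, hκ, hcl, h4⟩ := ih
      obtain ⟨j, s', κ', hκ', hcl', h4'⟩ := ih'
      refine ⟨ltab i j, mtab (kcls i j) (mtab (ctab j s) s'),
        kw i j * (((R j)⁻¹ * (κ * R j)) * κ'), mul_mem (kw_mem i j) (mul_mem ?_ hκ'), ?_, ?_⟩
      · have e : (R j)⁻¹ * (κ * R j) = (R j)⁻¹ * κ * R j := by group
        rw [e]; exact Kt_conj (R_mem j) hκ
      · -- class computation
        have c1 : agree 3 ((R j)⁻¹ * (κ * R j)) ((R j)⁻¹ * (p3 s * R j)) :=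
          agree_mul (agree_refl _ _) (agree_mul hcl (agree_refl _ _))
        have c2 : agree 3 ((R j)⁻¹ * (κ * R j)) (p3 (ctab j s)) :=
          agree_trans c1 (agree3b_iff.mp (T5 j s))
        have c3 : agree 3 (((R j)⁻¹ * (κ * R j)) * κ') (p3 (mtab (ctab j s) s')) :=
          agree_trans (agree_mul c2 hcl') (agree3b_iff.mp (T6 _ _))
        exact agree_trans (agree_mul (agree3b_iff.mp (T1c i j)) c3) (agree3b_iff.mp (T6 _ _))
      · -- depth-4 agreement
        have h1 : agree 4 (g * g') ((R i * κ) * (R j * κ')) := agree_mul h4 h4'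
        have e1 : (R i * κ) * (R j * κ') = (R i * R j) * (((R j)⁻¹ * (κ * R j)) * κ') := by
          group
        have h2 : agree 4 ((R i * R j) * (((R j)⁻¹ * (κ * R j)) * κ'))
            ((R (ltab i j) * kw i j) * (((R j)⁻¹ * (κ * R j)) * κ')) :=
          agree_mul (agree4b_iff.mp (T1 i j)) (agree_refl _ _)
        have e2 : (R (ltab i j) * kw i j) * (((R j)⁻¹ * (κ * R j)) * κ') =
            R (ltab i j) * (kw i j * (((R j)⁻¹ * (κ * R j)) * κ')) := by group
        exact agree_trans h1 (agree_trans (agree_of_eq e1) (agree_trans h2 (agree_of_eq e2)))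
  | inv g hg ih =>
      obtain ⟨i, s, κ, hκ, hcl, h4⟩ := ih
      refine ⟨itab i, mtab (ctab (itab i) (invtab s)) (kicls i),
        ((R (itab i))⁻¹ * (κ⁻¹ * R (itab i))) * kwi i,
        mul_mem ?_ (kwi_mem i), ?_, ?_⟩
      · have e : (R (itab i))⁻¹ * (κ⁻¹ * R (itab i)) = (R (itab i))⁻¹ * κ⁻¹ * R (itab i) := by
          group
        rw [e]; exact Kt_conj (R_mem _) (inv_mem hκ)
      · have c1 : agree 3 κ⁻¹ (p3 (invtab s)) :=
          agree_trans (agree_inv hcl) (agree3b_iff.mp (T7 s))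
        have c2 : agree 3 ((R (itab i))⁻¹ * (κ⁻¹ * R (itab i))) (p3 (ctab (itab i) (invtab s))) :=
          agree_trans (agree_mul (agree_refl _ _) (agree_mul c1 (agree_refl _ _)))
            (agree3b_iff.mp (T5 _ _))
        exact agree_trans (agree_mul c2 (agree3b_iff.mp (T2c i))) (agree3b_iff.mp (T6 _ _))
      · have h1 : agree 4 g⁻¹ (R i * κ)⁻¹ := agree_inv h4
        have e1 : (R i * κ)⁻¹ = κ⁻¹ * (R i)⁻¹ := by group
        have h2 : agree 4 (κ⁻¹ * (R i)⁻¹) (κ⁻¹ * (R (itab i) * kwi i)) :=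
          agree_mul (agree_refl _ _) (agree4b_iff.mp (T2 i))
        have e2 : κ⁻¹ * (R (itab i) * kwi i) =
            R (itab i) * (((R (itab i))⁻¹ * (κ⁻¹ * R (itab i))) * kwi i) := by group
        exact agree_trans h1 (agree_trans (agree_of_eq e1) (agree_trans h2 (agree_of_eq e2)))

/-! ### Pattern transfer -/

theorem transfer {ρ : AutT} (hρ : ρ ∈ Grigorchuk) (h3 : agree 3 1 ρ) :
    ∃ τ ∈ Kt, agree 4 τ ρ := by
  obtain ⟨i, s, κ, hκ, hcl, h4⟩ := main_ci hρ
  have hi : i = 0 := by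
    by_contra hne
    have h1 : agree 3 1 (R i * κ) := agree_trans h3 (agree_mono (by norm_num) h4)
    have h2 : agree 3 1 (R i * p3 s) :=
      agree_trans h1 (agree_mul (agree_refl _ _) hcl)
    have := agree3b_iff.mpr h2
    rw [T8 i s hne] at this
    exact Bool.false_ne_true this
  subst hi
  rw [R_zero, one_mul] at h4
  exact ⟨κ, hκ, agree_symm h4⟩

end AutT
namespace AutT

/-! ### Good approximability of all sections -/

def Good (g : AutT) : Prop := ∃ h ∈ Grigorchuk, agree 4 h g

def SecGood (g : AutT) : Prop := ∀ u : List Bool, Good (secAt g u)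

lemma Good_mul {g g' : AutT} (h : Good g) (h' : Good g') : Good (g * g') := by
  obtain ⟨a, ha, haa⟩ := h
  obtain ⟨b, hb, hbb⟩ := h'
  exact ⟨a * b, mul_mem ha hb, agree_mul haa hbb⟩

lemma Good_inv {g : AutT} (h : Good g) : Good g⁻¹ := by
  obtain ⟨a, ha, haa⟩ := h
  exact ⟨a⁻¹, inv_mem ha, agree_inv haa⟩

lemma SecGood_of_mem {g : AutT} (hg : g ∈ Grigorchuk) : SecGood g :=
  fun u => ⟨secAt g u, secAt_mem u hg, agree_refl _ _⟩

lemma SecGood_mul {g g' : AutT} (h : SecGood g) (h' : SecGood g') : SecGood (g * g') := by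
  intro u
  rw [secAt_mul]
  exact Good_mul (h u) (h' _)

lemma SecGood_inv {g : AutT} (h : SecGood g) : SecGood g⁻¹ := by
  intro u
  rw [secAt_inv]
  exact Good_inv (h _)

lemma SecGood_sec {g : AutT} (h : SecGood g) (x : Bool) : SecGood (sec g x) :=
  fun u => h (x :: u)

/-! ### The correction lemma -/

lemma correct : ∀ (j : ℕ) (k : AutT), SecGood k → agree (3 + j) 1 k →
    ∃ m ∈ Kt, agree (4 + j) m k
  | 0, k, hk, h3 => by
      obtain ⟨h, hG, h4⟩ := hk []
      have h3h : agree 3 1 h :=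
        agree_trans h3 (agree_symm (agree_mono (by omega) h4))
      obtain ⟨τ, hτ, hagr⟩ := transfer hG h3h
      exact ⟨τ, hτ, agree_trans hagr h4⟩
  | j+1, k, hk, h3 => by
      have hsec : ∀ x : Bool, ∃ m ∈ Kt, agree (4 + j) m (sec k x) := by
        intro x
        refine correct j (sec k x) (SecGood_sec hk x) ?_
        intro v hv
        have := h3 (x :: v) (by simp only [List.length_cons]; omega)
        rw [one_apply] at this ⊢
        exact this
      obtain ⟨m0, hm0, a0⟩ := hsec false
      obtain ⟨m1, hm1, a1⟩ := hsec true
      refine ⟨emb false m0 * emb true m1, mul_mem (Kt_emb hm0 false) (Kt_emb hm1 true), ?_⟩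
      intro v hv
      match v with
      | [] =>
          have := h3 [] (by simp)
          rw [one_apply] at this
          rw [← this]
          rfl
      | x :: w =>
          rw [mul_apply_cons, emb_nil, Bool.xor_false, sec_emb, sec_emb]
          have hw : w.length < 4 + j := by
            simp only [List.length_cons] at hv; omega
          cases x
          · rw [if_pos rfl, if_neg (show ¬(false = true) by decide), mul_one]
            exact a0 w hw
          · rw [if_neg (show ¬(true = false) by decide), if_pos rfl, one_mul]
            exact a1 w hw

/-! ### Approximation of pattern-good elements -/

lemma approx {g : AutT} (hg : SecGood g) : ∀ n : ℕ, ∃ h ∈ Grigorchuk, agree n h g := by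
  have key : ∀ j : ℕ, ∃ h ∈ Grigorchuk, agree (4 + j) h g := by
    intro j
    induction j with
    | zero => exact hg []
    | succ j ih =>
        obtain ⟨h, hG, ha⟩ := ih
        have hk : SecGood (h⁻¹ * g) := SecGood_mul (SecGood_inv (SecGood_of_mem hG)) hg
        have h3 : agree (3 + (j + 1)) 1 (h⁻¹ * g) := by
          have : agree (4 + j) (h⁻¹ * h) (h⁻¹ * g) := agree_mul (agree_refl _ _) ha
          rw [inv_mul_cancel] at this
          have he : 3 + (j + 1) = 4 + j := by omega
          rw [he]
          exact this
        obtain ⟨m, hm, ham⟩ := correct (j + 1) (h⁻¹ * g) hk h3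
        refine ⟨h * m, mul_mem hG (Kt_le hm), ?_⟩
        have h1 : agree (4 + (j + 1)) (h * m) (h * (h⁻¹ * g)) := agree_mul (agree_refl _ _) ham
        have he : h * (h⁻¹ * g) = g := by group
        rwa [he] at h1
  intro n
  obtain ⟨h, hG, ha⟩ := key n
  exact ⟨h, hG, agree_mono (by omega) ha⟩

end AutT
namespace AutT

section
attribute [local instance] PiNat.dist

lemma dist_toLevels (g h : AutT) : dist g h = dist (toLevels g) (toLevels h) := rfl

lemma agree_iff_levels {n : ℕ} {g h : AutT} :
    agree n g h ↔ ∀ i < n, toLevels g i = toLevels h i := by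
  constructor
  · intro H i hi
    funext v
    exact H (List.ofFn v) (by simpa using hi)
  · intro H u hu
    have h1 := congrFun (H u.length hu) u.get
    simpa [toLevels, List.ofFn_get] using h1

lemma dist_le_iff_agree {n : ℕ} {g h : AutT} :
    dist g h ≤ (1 / 2) ^ n ↔ agree n g h := by
  rw [dist_toLevels, ← PiNat.mem_cylinder_iff_dist_le, PiNat.mem_cylinder_iff,
    agree_iff_levels]

lemma agree_four_of_dist_lt {g h : AutT} (hd : dist g h < 1 / 8) : agree 4 g h := by
  intro u hu
  have h8 : dist (toLevels g) (toLevels h) < (1 / 2 : ℝ) ^ 3 := by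
    rw [← dist_toLevels]
    norm_num
    exact hd
  have h2 := PiNat.apply_eq_of_dist_lt h8 (show u.length ≤ 3 by omega)
  have h3 := congrFun h2 u.get
  simpa [toLevels, List.ofFn_get] using h3

end

lemma mem_closure_iff_agree {g : AutT} :
    g ∈ closure (Grigorchuk : Set AutT) ↔ ∀ n : ℕ, ∃ h ∈ Grigorchuk, agree n g h := by
  rw [Metric.mem_closure_iff]
  constructor
  · intro H n
    obtain ⟨h, hS, hd⟩ := H ((1 / 2) ^ n) (by positivity)
    exact ⟨h, hS, dist_le_iff_agree.mp hd.le⟩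
  · intro H ε hε
    obtain ⟨n, hn⟩ := exists_pow_lt_of_lt_one hε (by norm_num : (1 / 2 : ℝ) < 1)
    obtain ⟨h, hS, ha⟩ := H n
    exact ⟨h, hS, lt_of_le_of_lt (dist_le_iff_agree.mpr ha) hn⟩

end AutT

/-- A binary tree automorphism belongs to the closure of the Grigorchuk
group in `Aut(T)` if and only if the distance from each of its sections to the Grigorchuk
group is at most `1/16`. -/
theorem mem_closure_grigorchuk_iff_infDist_le (g : AutT) :
    g ∈ closure (Grigorchuk : Set AutT) ↔
      ∀ u : List Bool, Metric.infDist (secAt g u) (Grigorchuk : Set AutT) ≤ 1 / 16 := by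
  constructor
  · intro hg u
    have hc : secAt g u ∈ closure (Grigorchuk : Set AutT) := by
      rw [mem_closure_iff_agree] at hg ⊢
      intro n
      obtain ⟨h, hS, ha⟩ := hg (n + u.length)
      refine ⟨secAt h u, secAt_mem u hS, ?_⟩
      intro v hv
      exact ha (u ++ v) (by simp only [List.length_append]; omega)
    rw [Metric.infDist_zero_of_mem_closure hc]
    norm_num
  · intro H
    rw [mem_closure_iff_agree]
    have hsg : SecGood g := by
      intro u
      have h1 : Metric.infDist (secAt g u) (Grigorchuk : Set AutT) < 1 / 8 :=
        lt_of_le_of_lt (H u) (by norm_num)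
      have hne : (Grigorchuk : Set AutT).Nonempty := ⟨1, one_mem _⟩
      obtain ⟨h, hS, hd⟩ := (Metric.infDist_lt_iff hne).mp h1
      exact ⟨h, hS, agree_symm (agree_four_of_dist_lt hd)⟩
    intro n
    obtain ⟨h, hG, ha⟩ := approx hsg n
    exact ⟨h, hG, agree_symm ha⟩
end

section
/- Let W be a word over the alphabet {a,b,c,d}. If N^0_{b,c}(W) is even, then, modulo 2, N^{1,1}_{b,c}(W) = N^{0,1}_{b,c}(W) = N^{0,0}_{b,c}(W). -/
/-!
Words over the alphabet `{a, b, c, d}`, encoded as lists over `Fin 4`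
(`0 = a`, `1 = b`, `2 = c`, `3 = d`).
-/

/-- Is the letter one of the `{b,c}`-letters? -/
def isBC (x : Fin 4) : Bool := decide (x = 1 ∨ x = 2)

/-- The parity (number modulo 2) of occurrences of the letter `a` before position `i`
in the word `W`. -/
def aParity (W : List (Fin 4)) (i : ℕ) : ℕ := (W.take i).count 0 % 2

/-- The number of `{b,c}`-letters of parity `p` occurring before position `i` in `W`. -/
def NbcBefore (W : List (Fin 4)) (p : ℕ) (i : ℕ) : ℕ :=
  ((Finset.range i).filter fun j => isBC (W.getD j 0) = true ∧ aParity W j = p).card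

/-- `N^p_{b,c}(W)`: the number of `{b,c}`-letters of parity `p` in `W`. -/
def Nbc (W : List (Fin 4)) (p : ℕ) : ℕ := NbcBefore W p W.length

/-- `N^{p,q}_{b,c}(W)`: the number of `{b,c}`-letters `ℓ` of parity `p` in `W` such that
the number of `{b,c}`-letters of parity `p̄` appearing before `ℓ` in `W` has parity `q`. -/
def Nbc2 (W : List (Fin 4)) (p q : ℕ) : ℕ :=
  ((Finset.range W.length).filter fun i =>
    isBC (W.getD i 0) = true ∧ aParity W i = p ∧ NbcBefore W (1 - p) i % 2 = q).card

/-- The set of positions of `{b,c}`-letters of parity `p`. -/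
def Sbc (W : List (Fin 4)) (p : ℕ) : Finset ℕ :=
  (Finset.range W.length).filter fun j => isBC (W.getD j 0) = true ∧ aParity W j = p

lemma NbcBefore_eq_card (W : List (Fin 4)) (p j : ℕ) (hj : j ≤ W.length) :
    ((Sbc W p).filter (· < j)).card = NbcBefore W p j := by
  unfold Sbc NbcBefore
  congr 1
  ext i
  simp only [Finset.mem_filter, Finset.mem_range]
  constructor
  · rintro ⟨⟨_, hc⟩, hij⟩; exact ⟨hij, hc⟩
  · rintro ⟨hij, hc⟩; exact ⟨⟨lt_of_lt_of_le hij hj, hc⟩, hij⟩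

lemma Nbc2_as_filter (W : List (Fin 4)) (p q : ℕ) :
    Nbc2 W p q = ((Sbc W p).filter (fun i => NbcBefore W (1 - p) i % 2 = q)).card := by
  unfold Nbc2 Sbc
  rw [Finset.filter_filter]
  congr 1
  apply Finset.filter_congr
  intro i _
  simp [and_assoc]

lemma Nbc2_one_mod (W : List (Fin 4)) (p : ℕ) :
    Nbc2 W p 1 % 2 = (∑ i ∈ Sbc W p, NbcBefore W (1 - p) i) % 2 := by
  rw [Nbc2_as_filter, Finset.card_filter, Finset.sum_nat_mod
    (Sbc W p) 2 (fun i => NbcBefore W (1 - p) i)]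
  congr 1
  apply Finset.sum_congr rfl
  intro i _
  split_ifs with h <;> omega

/-- If `N⁰_{b,c}(W)` is even then `N^{1,1} = N^{0,1} = N^{0,0}` mod 2. -/
theorem Nbc2_eq_of_even_Nbc_zero (W : List (Fin 4)) (h : Nbc W 0 % 2 = 0) :
    Nbc2 W 1 1 % 2 = Nbc2 W 0 1 % 2 ∧ Nbc2 W 0 1 % 2 = Nbc2 W 0 0 % 2 := by
  have hS0 : (Sbc W 0).card = Nbc W 0 := rfl
  -- key double-counting identity
  have key : (∑ j ∈ Sbc W 1, NbcBefore W 0 j) + (∑ i ∈ Sbc W 0, NbcBefore W 1 i)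
      = (Sbc W 0).card * (Sbc W 1).card := by
    have h1 : ∀ j ∈ Sbc W 1, NbcBefore W 0 j
        = ∑ i ∈ Sbc W 0, if i < j then 1 else 0 := by
      intro j hj
      have hjn : j ≤ W.length :=
        le_of_lt (Finset.mem_range.mp (Finset.mem_filter.mp hj).1)
      rw [← NbcBefore_eq_card W 0 j hjn, Finset.card_filter]
    have h2 : ∀ i ∈ Sbc W 0, NbcBefore W 1 i
        = ∑ j ∈ Sbc W 1, if j < i then 1 else 0 := by
      intro i hi
      have hin : i ≤ W.length :=
        le_of_lt (Finset.mem_range.mp (Finset.mem_filter.mp hi).1)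
      rw [← NbcBefore_eq_card W 1 i hin, Finset.card_filter]
    rw [Finset.sum_congr rfl h1, Finset.sum_congr rfl h2, Finset.sum_comm,
      ← Finset.sum_add_distrib]
    have : ∀ i ∈ Sbc W 0,
        ((∑ j ∈ Sbc W 1, if i < j then 1 else 0)
          + ∑ j ∈ Sbc W 1, if j < i then 1 else 0)
        = ∑ j ∈ Sbc W 1, 1 := by
      intro i hi
      rw [← Finset.sum_add_distrib]
      apply Finset.sum_congr rfl
      intro j hj
      have hne : i ≠ j := by
        intro he
        have h0 : aParity W i = 0 := (Finset.mem_filter.mp hi).2.2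
        have h1' : aParity W j = 1 := (Finset.mem_filter.mp hj).2.2
        rw [he, h1'] at h0
        exact one_ne_zero h0
      have : i < j ∨ j < i := Nat.lt_or_ge i j |>.imp id (fun hge => lt_of_le_of_ne hge (Ne.symm hne))
      rcases this with hlt | hlt <;> split_ifs <;> omega
    rw [Finset.sum_congr rfl this]
    simp [Finset.sum_const, mul_comm]
  -- partition identity
  have hyz : Nbc2 W 0 1 + Nbc2 W 0 0 = Nbc W 0 := by
    rw [Nbc2_as_filter, Nbc2_as_filter, ← hS0]
    have := Finset.card_filter_add_card_filter_not
      (s := Sbc W 0) (p := fun i => NbcBefore W 1 i % 2 = 1)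
    rw [← this]
    norm_num
  have hx := Nbc2_one_mod W 1
  have hy := Nbc2_one_mod W 0
  norm_num at hx hy
  have hmul : ((Sbc W 0).card * (Sbc W 1).card) % 2 = 0 := by
    rw [Nat.mul_mod, hS0, h]
    simp
  omega
end

section
/- Let W be a word over the alphabet {a,b,c,d}. If N^0_{b,c}(W) is odd, then, modulo 2, N^{1,0}_{b,c}(W) = N^{0,1}_{b,c}(W) and N^{0,1}_{b,c}(W) ≠ N^{0,0}_{b,c}(W). -/
def Sp (W : List (Fin 4)) (p : ℕ) : Finset ℕ :=
  (Finset.range W.length).filter fun j => isBC (W.getD j 0) = true ∧ aParity W j = p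

lemma Nbc_eq (W : List (Fin 4)) (p : ℕ) : Nbc W p = (Sp W p).card := rfl

lemma NbcBefore_eq (W : List (Fin 4)) (p i : ℕ) (hi : i ≤ W.length) :
    NbcBefore W p i = ((Sp W p).filter (· < i)).card := by
  unfold NbcBefore Sp
  rw [Finset.filter_filter]
  congr 1
  ext j
  simp only [Finset.mem_filter, Finset.mem_range]
  constructor
  · rintro ⟨hj, hP⟩; exact ⟨lt_of_lt_of_le hj hi, hP, hj⟩
  · rintro ⟨_, hP, hj⟩; exact ⟨hj, hP⟩

lemma Nbc2_eq (W : List (Fin 4)) (p q : ℕ) : Nbc2 W p q =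
    ((Sp W p).filter (fun i => NbcBefore W (1-p) i % 2 = q)).card := by
  unfold Nbc2 Sp
  rw [Finset.filter_filter]
  congr 1
  apply Finset.filter_congr
  intro i _
  tauto

lemma Nbc2_add (W : List (Fin 4)) (p : ℕ) : Nbc2 W p 0 + Nbc2 W p 1 = Nbc W p := by
  have hpart := Finset.card_filter_add_card_filter_not (s := Sp W p)
      (p := fun i => NbcBefore W (1-p) i % 2 = 0)
  have hflt : Finset.filter (fun i => NbcBefore W (1-p) i % 2 = 1) (Sp W p)
      = Finset.filter (fun i => ¬ NbcBefore W (1-p) i % 2 = 0) (Sp W p) := by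
    apply Finset.filter_congr
    intro i _
    constructor <;> omega
  rw [Nbc2_eq, Nbc2_eq, Nbc_eq, hflt, hpart]

lemma card_filter_odd (T : Finset ℕ) (f : ℕ → ℕ) :
    (((T.filter (fun i => f i % 2 = 1)).card : ZMod 2)) = ∑ i ∈ T, (f i : ZMod 2) := by
  rw [Finset.card_filter]
  push_cast
  apply Finset.sum_congr rfl
  intro i _
  rcases Nat.mod_two_eq_zero_or_one (f i) with h | h <;>
    simp [h, ← ZMod.natCast_mod (f i) 2]

lemma pair_sum (W : List (Fin 4)) :
    (∑ i ∈ Sp W 1, ((Sp W 0).filter (· < i)).card) +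
    (∑ i ∈ Sp W 0, ((Sp W 1).filter (· < i)).card) = (Sp W 1).card * (Sp W 0).card := by
  have hne : ∀ i ∈ Sp W 1, ∀ j ∈ Sp W 0, i ≠ j := by
    intro i hi j hj h
    subst h
    simp only [Sp, Finset.mem_filter] at hi hj
    omega
  simp only [Finset.card_filter]
  rw [Finset.sum_comm (s := Sp W 0) (t := Sp W 1)]
  rw [← Finset.sum_add_distrib]
  rw [Finset.card_eq_sum_ones (Sp W 1), Finset.sum_mul]
  apply Finset.sum_congr rfl
  intro i hi
  rw [← Finset.sum_add_distrib, one_mul, Finset.card_eq_sum_ones]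
  apply Finset.sum_congr rfl
  intro j hj
  have := hne i hi j hj
  rcases lt_trichotomy j i with h | h | h <;> simp [h] <;> omega

/-- If `N⁰_{b,c}(W)` is odd then `N^{1,0} = N^{0,1} ≠ N^{0,0}` mod 2. -/
theorem Nbc2_eq_of_odd_Nbc_zero (W : List (Fin 4)) (h : Nbc W 0 % 2 = 1) :
    Nbc2 W 1 0 % 2 = Nbc2 W 0 1 % 2 ∧ Nbc2 W 0 1 % 2 ≠ Nbc2 W 0 0 % 2 := by
  have h00 : Nbc2 W 0 0 + Nbc2 W 0 1 = Nbc W 0 := Nbc2_add W 0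
  have h11 : Nbc2 W 1 0 + Nbc2 W 1 1 = Nbc W 1 := Nbc2_add W 1
  -- mod 2 facts in ZMod 2
  have cast1 : ((Nbc2 W 1 1 : ℕ) : ZMod 2) = ∑ i ∈ Sp W 1, (((Sp W 0).filter (· < i)).card : ZMod 2) := by
    rw [Nbc2_eq]
    have : ∀ i ∈ Sp W 1, NbcBefore W (1-1) i = ((Sp W 0).filter (· < i)).card := by
      intro i hi
      apply NbcBefore_eq
      simp only [Sp, Finset.mem_filter, Finset.mem_range] at hi
      omega
    rw [Finset.filter_congr (fun i hi => by rw [this i hi])]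
    exact card_filter_odd _ _
  have cast0 : ((Nbc2 W 0 1 : ℕ) : ZMod 2) = ∑ i ∈ Sp W 0, (((Sp W 1).filter (· < i)).card : ZMod 2) := by
    rw [Nbc2_eq]
    have : ∀ i ∈ Sp W 0, NbcBefore W (1-0) i = ((Sp W 1).filter (· < i)).card := by
      intro i hi
      apply NbcBefore_eq
      simp only [Sp, Finset.mem_filter, Finset.mem_range] at hi
      omega
    rw [Finset.filter_congr (fun i hi => by rw [this i hi])]
    exact card_filter_odd _ _
  have hpair := pair_sum W
  have hA : Nbc2 W 1 1 % 2 = (∑ i ∈ Sp W 1, ((Sp W 0).filter (· < i)).card) % 2 := by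
    rw [← ZMod.natCast_eq_natCast_iff']
    rw [cast1]; push_cast; rfl
  have hB : Nbc2 W 0 1 % 2 = (∑ i ∈ Sp W 0, ((Sp W 1).filter (· < i)).card) % 2 := by
    rw [← ZMod.natCast_eq_natCast_iff']
    rw [cast0]; push_cast; rfl
  have hP : ((Sp W 1).card * (Sp W 0).card) % 2 = Nbc W 1 % 2 := by
    rw [← Nbc_eq, ← Nbc_eq, Nat.mul_mod, h, mul_one, Nat.mod_mod]
  rw [← hpair] at hP
  exact ⟨by omega, by omega⟩
end

section
/- The binary tree automorphism f determined by the recursive decomposition formulas f=(ℓ,r)σ, ℓ=(r,m)σ, r=(m,r)σ, m=(n,f)σ, n=(r,m) is not a bounded automorphism; that is, the sums Σ_{u ∈ X^n} α_u(f) over the vertices u of level n are not uniformly bounded over all n. -/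
namespace AutT

/-- The transition function of the 5-state automaton defining the automorphism `f`
(states: `0 = f`, `1 = ℓ`, `2 = r`, `3 = m`, `4 = n`), encoding the decomposition
formulas `f = (ℓ,r)σ`, `ℓ = (r,m)σ`, `r = (m,r)σ`, `m = (n,f)σ`, `n = (r,m)`. -/
def fStep : Fin 5 → Bool → Fin 5 := fun i x =>
  ![![1, 2], ![2, 3], ![3, 2], ![4, 0], ![2, 3]] i (cond x 1 0)

/-- The portraits of the five states: the states `f`, `ℓ`, `r`, `m` are active at the
root and `n` is not. -/
def fPort : Fin 5 → List Bool → Bool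
  | i, [] => ![true, true, true, true, false] i
  | i, x :: u => fPort (fStep i x) u

/-- The binary tree automorphism `f` determined by the recursive decomposition formulas
`f = (ℓ,r)σ`, `ℓ = (r,m)σ`, `r = (m,r)σ`, `m = (n,f)σ`, `n = (r,m)`. -/
def fAut : AutT := fPort 0

end AutT

open AutT

/-!
Every state of the automaton reached by reading a `1` is one of `r`, `m`, `f`, all active at
the root. Hence `f` is active at every vertex ending in `1`, i.e. at `2 ^ n` of the vertices of
level `n + 1`.
-/

namespace AutT

lemma fPort_fStep_true_nil (i : Fin 5) : fPort (fStep i true) [] = true := by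
  fin_cases i <;> rfl

lemma fPort_append_true : ∀ (u : List Bool) (i : Fin 5), fPort i (u ++ [true]) = true
  | [], i => fPort_fStep_true_nil i
  | x :: u, i => fPort_append_true u (fStep i x)

lemma sum_ite_last_eq_two_pow (n : ℕ) :
    (∑ v : Fin (n + 1) → Bool, if v (Fin.last n) = true then 1 else 0) = 2 ^ n := by
  rw [← (Fin.snocEquiv fun _ => Bool).sum_comp, Fintype.sum_prod_type]
  simp

lemma two_pow_le_sum_alpha_of_active_append_true (g : AutT)
    (hg : ∀ u, g (u ++ [true]) = true) (n : ℕ) :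
    2 ^ n ≤ ∑ v : Fin (n + 1) → Bool, if alpha g (List.ofFn v) = true then 1 else 0 := by
  rw [← sum_ite_last_eq_two_pow]
  refine Finset.sum_le_sum fun v _ => ?_
  by_cases hlast : v (Fin.last n) = true
  · have hv : alpha g (List.ofFn v) = true := by
      rw [alpha, List.ofFn_succ', List.concat_eq_append, hlast, hg]
    simp only [hlast, hv, if_true, le_refl]
  · simp only [hlast, Bool.false_eq_true, if_false, zero_le]

end AutT

/-- The automorphism `f` is not bounded: the number of active vertices
of `f` at level `n` is not uniformly bounded over all `n`. -/
theorem fAut_not_bounded :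
    ¬ ∃ C : ℕ, ∀ n : ℕ,
      (∑ v : Fin n → Bool, if alpha fAut (List.ofFn v) = true then 1 else 0) ≤ C := by
  rintro ⟨C, hC⟩
  have h := (two_pow_le_sum_alpha_of_active_append_true fAut (fPort_append_true · 0) C).trans
    (hC (C + 1))
  exact Nat.lt_two_pow_self.not_ge h
end
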